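/- arXiv:2408.15763 — 7 statements merged into one kernel-verified Lean document; each statement's English description precedes it below -/
import Mathlib

section
/- Let G be a finite group and S ⊆ G. If T ⊆ G³ is a triangle presentation compatible with F(G,S) that is invariant under the diagonal left-multiplication action of G (i.e. (gx, gy, gz) ∈ T for all g ∈ G and (x,y,z) ∈ T), then there exists a map λ : S → S such that s·λ(s)·λ(λ(s)) = 1_G for all s ∈ S and T = {(x, xs, x·s·λ(s)) : x ∈ G, s ∈ S}. -/
/-- `F(G,S) = {(x, xs) : x ∈ G, s ∈ S}`. -/
def FGS {G : Type*} [Group G] (S : Set G) : Set (G × G) :=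
  {p | ∃ x : G, ∃ s ∈ S, p = (x, x * s)}

/-- `T ⊆ G³` is a triangle presentation compatible with `F ⊆ G × G`. -/
def IsTrianglePresentationG {G : Type*} [Group G] (F : Set (G × G))
    (T : Set (G × G × G)) : Prop :=
  (∀ x y z : G, (x, y, z) ∈ T → (x, y) ∈ F) ∧
  (∀ x y : G, (x, y) ∈ F → ∃! z : G, (x, y, z) ∈ T) ∧
  (∀ x y z : G, (x, y, z) ∈ T → (y, z, x) ∈ T)

/-- If `T` is a triangle presentation compatible with `F(G,S)` which is invariant under
the diagonal left-multiplication action of `G`, then there is a map `λ : S → S` with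
`s·λ(s)·λ(λ(s)) = 1` for all `s ∈ S` such that `T = {(x, xs, xsλ(s)) : x ∈ G, s ∈ S}`. -/
theorem invariant_trianglePresentation_eq_lambda (G : Type*) [Group G] [Fintype G]
    (S : Set G) (T : Set (G × G × G)) (hT : IsTrianglePresentationG (FGS S) T)
    (hinv : ∀ g x y z : G, (x, y, z) ∈ T → (g * x, g * y, g * z) ∈ T) :
    ∃ lam : G → G, (∀ s ∈ S, lam s ∈ S) ∧
      (∀ s ∈ S, s * lam s * lam (lam s) = 1) ∧
      T = {t : G × G × G | ∃ x : G, ∃ s ∈ S, t = (x, x * s, x * s * lam s)} := by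
  classical
  obtain ⟨h1, h2, h3⟩ := hT
  have hF : ∀ s ∈ S, ((1 : G), s) ∈ FGS S := fun s hs => ⟨1, s, hs, by simp⟩
  set lam : G → G := fun s =>
    if hs : s ∈ S then s⁻¹ * (h2 1 s (hF s hs)).choose else 1 with hlam
  have hlamT : ∀ s ∈ S, ((1 : G), s, s * lam s) ∈ T := by
    intro s hs
    have h := (h2 1 s (hF s hs)).choose_spec.1
    have : s * lam s = (h2 1 s (hF s hs)).choose := by
      simp [hlam, hs, mul_assoc]
    rwa [this]
  have huniq : ∀ s ∈ S, ∀ y : G, ((1 : G), s, y) ∈ T → y = s * lam s := by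
    intro s hs y hy
    have h := (h2 1 s (hF s hs)).choose_spec.2 y hy
    rw [h]
    simp [hlam, hs, mul_assoc]
  have hmem : ∀ s ∈ S, lam s ∈ S := by
    intro s hs
    have hrot : (s, s * lam s, (1 : G)) ∈ T := h3 _ _ _ (hlamT s hs)
    obtain ⟨x, s', hs', heq⟩ := h1 _ _ _ hrot
    have hx : s = x := (Prod.mk.injEq _ _ _ _).mp heq |>.1
    have hy : s * lam s = x * s' := (Prod.mk.injEq _ _ _ _).mp heq |>.2
    have : lam s = s' := by
      rw [← hx] at hy
      exact mul_left_cancel hy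
    rw [this]; exact hs'
  refine ⟨lam, hmem, ?_, ?_⟩
  · intro s hs
    have hrot : (s, s * lam s, (1 : G)) ∈ T := h3 _ _ _ (hlamT s hs)
    have htr : ((1 : G), lam s, s⁻¹) ∈ T := by
      have := hinv s⁻¹ _ _ _ hrot
      simpa [mul_assoc] using this
    have := huniq (lam s) (hmem s hs) s⁻¹ htr
    have h' : s * (lam s * lam (lam s)) = 1 := by
      rw [← this]; simp
    rw [mul_assoc]; exact h'
  · ext ⟨x, y, z⟩
    constructor
    · intro hxyz
      obtain ⟨x', s, hs, heq⟩ := h1 _ _ _ hxyz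
      have hx : x = x' := (Prod.mk.injEq _ _ _ _).mp heq |>.1
      have hy : y = x' * s := (Prod.mk.injEq _ _ _ _).mp heq |>.2
      subst hx
      have htr : ((1 : G), s, x⁻¹ * z) ∈ T := by
        have := hinv x⁻¹ _ _ _ hxyz
        simpa [hy, mul_assoc] using this
      have hz := huniq s hs _ htr
      refine ⟨x, s, hs, ?_⟩
      have : z = x * (s * lam s) := by
        rw [← hz]; simp
      simp [hy, this, mul_assoc]
    · rintro ⟨x', s, hs, heq⟩
      rw [heq]
      have := hinv x' _ _ _ (hlamT s hs)
      simpa [mul_assoc] using this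
end

section
/- Let G be a finite group, S ⊆ G, H ≤ G a subgroup, and let λ : S → S be a bijection with λ³ = id_S such that s·λ(s)·λ(λ(s)) = 1_G and s·λ(λ(s))·λ(s) = 1_G for all s ∈ S. Call s ∈ S breakable if the set {s, λ(s), λ(λ(s))} has exactly 3 elements and is contained in H. Let κ : G × S → {1, -1} be any function such that κ(x,s) = κ(x',s') whenever xH = x'H and s' ∈ {s, λ(s), λ(λ(s))}. Then T_κ = {(x, xs, x·s·λ(s)) : x ∈ G, s ∈ S not breakable} ∪ {(x, xs, x·s·λ^{κ(x,s)}(s)) : x ∈ G, s ∈ S breakable} is a triangle presentation compatible with F(G,S), where λ^1 = λ and λ^{-1} = λ², the inverse of λ. -/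
/-- `s` is breakable (w.r.t. `λ` and `H`) if its `λ`-orbit `{s, λ(s), λ²(s)}`
has exactly `3` elements and is contained in `H`. -/
def Breakable {G : Type*} [Group G] (H : Subgroup G) (lam : G → G) (s : G) : Prop :=
  ({s, lam s, lam (lam s)} : Set G).ncard = 3 ∧ ({s, lam s, lam (lam s)} : Set G) ⊆ H

/-- Given a bijection `λ : S → S` with `λ³ = id` and `s·λ(s)·λ²(s) = s·λ²(s)·λ(s) = 1`
for all `s ∈ S`, and a sign function `κ` constant on (coset, orbit) pairs, the set `T_κ`
obtained by applying `λ^{κ(x,s)}` (with `λ^{-1} = λ²`) on breakable elements is a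
triangle presentation compatible with `F(G,S)`. -/
theorem trianglePresentation_kappa (G : Type*) [Group G] [Fintype G] (S : Set G)
    (H : Subgroup G) (lam : G → G)
    (hmaps : ∀ s ∈ S, lam s ∈ S)
    (hbij : Set.BijOn lam S S)
    (hord : ∀ s ∈ S, lam (lam (lam s)) = s)
    (h1 : ∀ s ∈ S, s * lam s * lam (lam s) = 1)
    (h2 : ∀ s ∈ S, s * lam (lam s) * lam s = 1)
    (κ : G → G → ℤˣ)
    (hκ : ∀ x x' : G, ∀ s ∈ S, ∀ s' ∈ S, x⁻¹ * x' ∈ H →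
      s' ∈ ({s, lam s, lam (lam s)} : Set G) → κ x s = κ x' s') :
    IsTrianglePresentationG (FGS S)
      ({t : G × G × G | ∃ x : G, ∃ s ∈ S, ¬ Breakable H lam s ∧
          t = (x, x * s, x * s * lam s)} ∪
       {t : G × G × G | ∃ x : G, ∃ s ∈ S, Breakable H lam s ∧
          t = (x, x * s, x * s * (if κ x s = 1 then lam s else lam (lam s)))}) := by
  classical
  have horb : ∀ s ∈ S, ({lam s, lam (lam s), lam (lam (lam s))} : Set G)
      = ({s, lam s, lam (lam s)} : Set G) := by
    intro s hs
    rw [hord s hs]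
    ext t
    simp only [Set.mem_insert_iff, Set.mem_singleton_iff]
    tauto
  have hbrk : ∀ s ∈ S, (Breakable H lam (lam s) ↔ Breakable H lam s) := by
    intro s hs
    unfold Breakable
    rw [horb s hs]
  refine ⟨?_, ?_, ?_⟩
  · rintro x y z (⟨x', s, hs, -, heq⟩ | ⟨x', s, hs, -, heq⟩) <;>
      simp only [Prod.mk.injEq] at heq <;>
      obtain ⟨rfl, rfl, rfl⟩ := heq <;>
      exact ⟨x, s, hs, rfl⟩
  · rintro x y ⟨x', s, hs, heq⟩
    simp only [Prod.mk.injEq] at heq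
    obtain ⟨rfl, rfl⟩ := heq
    by_cases hb : Breakable H lam s
    · refine ⟨x * s * (if κ x s = 1 then lam s else lam (lam s)),
        Or.inr ⟨x, s, hs, hb, rfl⟩, ?_⟩
      rintro z (⟨x₁, s₁, hs₁, hnb₁, heq⟩ | ⟨x₁, s₁, hs₁, hb₁, heq⟩) <;>
          simp only [Prod.mk.injEq] at heq
      · obtain ⟨rfl, he, rfl⟩ := heq
        obtain rfl : s = s₁ := mul_left_cancel he
        exact absurd hb hnb₁
      · obtain ⟨rfl, he, rfl⟩ := heq
        obtain rfl : s = s₁ := mul_left_cancel he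
        rfl
    · refine ⟨x * s * lam s, Or.inl ⟨x, s, hs, hb, rfl⟩, ?_⟩
      rintro z (⟨x₁, s₁, hs₁, hnb₁, heq⟩ | ⟨x₁, s₁, hs₁, hb₁, heq⟩) <;>
          simp only [Prod.mk.injEq] at heq
      · obtain ⟨rfl, he, rfl⟩ := heq
        obtain rfl : s = s₁ := mul_left_cancel he
        rfl
      · obtain ⟨rfl, he, rfl⟩ := heq
        obtain rfl : s = s₁ := mul_left_cancel he
        exact absurd hb₁ hb
  · rintro x y z (⟨x', s, hs, hnb, heq⟩ | ⟨x', s, hs, hb, heq⟩) <;>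
      simp only [Prod.mk.injEq] at heq
    · obtain ⟨rfl, rfl, rfl⟩ := heq
      refine Or.inl ⟨x * s, lam s, hmaps s hs,
        fun h => hnb ((hbrk s hs).mp h), ?_⟩
      have hx : x * s * lam s * lam (lam s) = x := by
        rw [show x * s * lam s * lam (lam s) = x * (s * lam s * lam (lam s)) by group,
          h1 s hs, mul_one]
      simp only [Prod.mk.injEq]
      exact ⟨trivial, trivial, hx.symm⟩
    · obtain ⟨rfl, rfl, rfl⟩ := heq
      have hsH : x⁻¹ * (x * s) ∈ H := by
        rw [inv_mul_cancel_left]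
        exact hb.2 (Set.mem_insert _ _)
      by_cases hκ1 : κ x s = 1
      · have hκeq : κ x s = κ (x * s) (lam s) :=
          hκ x (x * s) s hs (lam s) (hmaps s hs) hsH
            (Set.mem_insert_of_mem _ (Set.mem_insert _ _))
        refine Or.inr ⟨x * s, lam s, hmaps s hs, (hbrk s hs).mpr hb, ?_⟩
        have hx : x * s * lam s * lam (lam s) = x := by
          rw [show x * s * lam s * lam (lam s) = x * (s * lam s * lam (lam s)) by group,
            h1 s hs, mul_one]
        rw [if_pos hκ1, if_pos (hκeq ▸ hκ1)]
        simp only [Prod.mk.injEq]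
        exact ⟨trivial, trivial, hx.symm⟩
      · have hκeq : κ x s = κ (x * s) (lam (lam s)) :=
          hκ x (x * s) s hs (lam (lam s)) (hmaps _ (hmaps s hs)) hsH
            (Set.mem_insert_of_mem _ (Set.mem_insert_of_mem _ rfl))
        refine Or.inr ⟨x * s, lam (lam s), hmaps _ (hmaps s hs),
          ((hbrk (lam s) (hmaps s hs)).mpr ((hbrk s hs).mpr hb)), ?_⟩
        have hx : x * s * lam (lam s) * lam s = x := by
          rw [show x * s * lam (lam s) * lam s = x * (s * lam (lam s) * lam s) by group,
            h2 s hs, mul_one]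
        rw [if_neg hκ1, if_neg (hκeq ▸ hκ1), hord s hs]
        simp only [Prod.mk.injEq]
        exact ⟨trivial, trivial, hx.symm⟩
end

section
/- Let G be a finite group, S ⊆ G, H ≤ G a subgroup, and let λ : S → S be a bijection with λ³ = id_S such that s·λ(s)·λ(λ(s)) = 1_G and s·λ(λ(s))·λ(s) = 1_G for all s ∈ S. Let m be the number of orbits of λ on S that have exactly 3 elements and are contained in H. Then the number of distinct triangle presentations compatible with F(G,S) is at least 2^{[G:H]·m}. -/
/-- The set of size-3 orbits of `lam` contained in `H`. -/
def tpOrbs {G : Type*} [Group G] (S : Set G) (H : Subgroup G) (lam : G → G) : Set (Set G) :=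
  {O : Set G | (∃ s ∈ S, O = {s, lam s, lam (lam s)}) ∧ O.ncard = 3 ∧ O ⊆ (H : Set G)}

open Classical in
/-- The chosen "third direction" at vertex `x` with edge label `s`. -/
noncomputable def tpMu {G : Type*} [Group G] (S : Set G) (H : Subgroup G) (lam : G → G)
    (f : (G ⧸ H) × ↥(tpOrbs S H lam) → Bool) (x s : G) : G :=
  if ∃ O : ↥(tpOrbs S H lam), s ∈ (O : Set G) ∧ f (QuotientGroup.mk x, O) = true
  then lam (lam s) else lam s

/-- The triangle presentation associated to a choice function `f`. -/
noncomputable def tpT {G : Type*} [Group G] (S : Set G) (H : Subgroup G) (lam : G → G)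
    (f : (G ⧸ H) × ↥(tpOrbs S H lam) → Bool) : Set (G × G × G) :=
  {p | ∃ x : G, ∃ s ∈ S, p = (x, x * s, x * s * tpMu S H lam f x s)}

lemma tp_orbit_eq {G : Type*} [Group G] (S : Set G) (lam : G → G)
    (hmaps : ∀ s ∈ S, lam s ∈ S) (hord : ∀ s ∈ S, lam (lam (lam s)) = s)
    {O : Set G} {s : G} (ht : ∃ t ∈ S, O = {t, lam t, lam (lam t)}) (hs : s ∈ O) :
    s ∈ S ∧ O = {s, lam s, lam (lam s)} := by
  obtain ⟨t, htS, rfl⟩ := ht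
  have h3 := hord t htS
  simp only [Set.mem_insert_iff, Set.mem_singleton_iff] at hs
  rcases hs with rfl | rfl | rfl
  · exact ⟨htS, rfl⟩
  · refine ⟨hmaps t htS, ?_⟩
    ext u
    simp only [Set.mem_insert_iff, Set.mem_singleton_iff, h3]
    tauto
  · refine ⟨hmaps _ (hmaps t htS), ?_⟩
    ext u
    simp only [Set.mem_insert_iff, Set.mem_singleton_iff, h3]
    tauto

lemma tpMu_mem {G : Type*} [Group G] (S : Set G) (H : Subgroup G) (lam : G → G)
    (hmaps : ∀ s ∈ S, lam s ∈ S)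
    (f : (G ⧸ H) × ↥(tpOrbs S H lam) → Bool) (x s : G) (hs : s ∈ S) :
    tpMu S H lam f x s ∈ S := by
  unfold tpMu
  split
  · exact hmaps _ (hmaps s hs)
  · exact hmaps s hs

lemma tpMu_spec {G : Type*} [Group G] (S : Set G) (H : Subgroup G) (lam : G → G)
    (hmaps : ∀ s ∈ S, lam s ∈ S)
    (hord : ∀ s ∈ S, lam (lam (lam s)) = s)
    (h1 : ∀ s ∈ S, s * lam s * lam (lam s) = 1)
    (h2 : ∀ s ∈ S, s * lam (lam s) * lam s = 1)
    (f : (G ⧸ H) × ↥(tpOrbs S H lam) → Bool) (x s : G) (hs : s ∈ S) :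
    s * tpMu S H lam f x s * tpMu S H lam f (x * s) (tpMu S H lam f x s) = 1 := by
  classical
  by_cases hP : ∃ O : ↥(tpOrbs S H lam), s ∈ (O : Set G) ∧ f (QuotientGroup.mk x, O) = true
  · obtain ⟨O, hsO, hfO⟩ := hP
    have hOrb := O.2
    obtain ⟨hexist, hcard, hsub⟩ := hOrb
    have hOeq := tp_orbit_eq S lam hmaps hord hexist hsO
    have hmu1 : tpMu S H lam f x s = lam (lam s) := by
      unfold tpMu
      rw [if_pos ⟨O, hsO, hfO⟩]
    have hmemH : s ∈ H := hsub hsO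
    have hcoset : (QuotientGroup.mk (x * s) : G ⧸ H) = QuotientGroup.mk x :=
      QuotientGroup.mk_mul_of_mem x hmemH
    have hlam2O : lam (lam s) ∈ (O : Set G) := by
      rw [hOeq.2]; right; right; rfl
    have hmu2 : tpMu S H lam f (x * s) (lam (lam s)) = lam s := by
      unfold tpMu
      rw [if_pos ⟨O, hlam2O, by rw [hcoset]; exact hfO⟩]
      rw [hord s hs]
    rw [hmu1, hmu2]
    exact h2 s hs
  · have hmu1 : tpMu S H lam f x s = lam s := by
      unfold tpMu
      rw [if_neg hP]
    have hP2 : ¬ ∃ O : ↥(tpOrbs S H lam), lam s ∈ (O : Set G) ∧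
        f (QuotientGroup.mk (x * s), O) = true := by
      rintro ⟨O, hmem, hf⟩
      obtain ⟨hexist, hcard, hsub⟩ := O.2
      have hOeq := tp_orbit_eq S lam hmaps hord hexist hmem
      have hsO : s ∈ (O : Set G) := by
        rw [hOeq.2]; right; right
        exact (hord s hs).symm
      have hmemH : s ∈ H := hsub hsO
      have hcoset : (QuotientGroup.mk (x * s) : G ⧸ H) = QuotientGroup.mk x :=
        QuotientGroup.mk_mul_of_mem x hmemH
      exact hP ⟨O, hsO, by rw [← hcoset]; exact hf⟩
    have hmu2 : tpMu S H lam f (x * s) (lam s) = lam (lam s) := by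
      unfold tpMu
      rw [if_neg hP2]
    rw [hmu1, hmu2]
    exact h1 s hs

lemma tpT_isTP {G : Type*} [Group G] (S : Set G) (H : Subgroup G) (lam : G → G)
    (hmaps : ∀ s ∈ S, lam s ∈ S)
    (hord : ∀ s ∈ S, lam (lam (lam s)) = s)
    (h1 : ∀ s ∈ S, s * lam s * lam (lam s) = 1)
    (h2 : ∀ s ∈ S, s * lam (lam s) * lam s = 1)
    (f : (G ⧸ H) × ↥(tpOrbs S H lam) → Bool) :
    IsTrianglePresentationG (FGS S) (tpT S H lam f) := by
  refine ⟨?_, ?_, ?_⟩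
  · rintro x y z ⟨x', s, hsS, hp⟩
    simp only [Prod.mk.injEq] at hp
    obtain ⟨rfl, rfl, rfl⟩ := hp
    exact ⟨x, s, hsS, rfl⟩
  · rintro x y ⟨x', s, hsS, hp⟩
    simp only [Prod.mk.injEq] at hp
    obtain ⟨rfl, rfl⟩ := hp
    refine ⟨x * s * tpMu S H lam f x s, ⟨x, s, hsS, rfl⟩, ?_⟩
    rintro z ⟨x', s', hs'S, hp⟩
    simp only [Prod.mk.injEq] at hp
    obtain ⟨rfl, hy, rfl⟩ := hp
    have hss : s' = s := mul_left_cancel hy.symm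
    rw [hss]
  · rintro x y z ⟨x', s, hsS, hp⟩
    simp only [Prod.mk.injEq] at hp
    obtain ⟨rfl, rfl, rfl⟩ := hp
    refine ⟨x * s, tpMu S H lam f x s, tpMu_mem S H lam hmaps f x s hsS, ?_⟩
    have hspec := tpMu_spec S H lam hmaps hord h1 h2 f x s hsS
    simp only [Prod.mk.injEq]
    refine ⟨trivial, trivial, ?_⟩
    calc x = x * (s * tpMu S H lam f x s * tpMu S H lam f (x * s) (tpMu S H lam f x s)) := by
            rw [hspec, mul_one]
      _ = x * s * tpMu S H lam f x s * tpMu S H lam f (x * s) (tpMu S H lam f x s) := by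
            group

lemma tpMu_eq_of_tpT_eq {G : Type*} [Group G] (S : Set G) (H : Subgroup G) (lam : G → G)
    (f g : (G ⧸ H) × ↥(tpOrbs S H lam) → Bool)
    (hT : tpT S H lam f = tpT S H lam g) (x s : G) (hs : s ∈ S) :
    tpMu S H lam f x s = tpMu S H lam g x s := by
  have hmem : (x, x * s, x * s * tpMu S H lam f x s) ∈ tpT S H lam g := by
    rw [← hT]; exact ⟨x, s, hs, rfl⟩
  obtain ⟨x', s', hs', hp⟩ := hmem
  simp only [Prod.mk.injEq] at hp
  obtain ⟨rfl, hy, hz⟩ := hp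
  have hss : s' = s := mul_left_cancel hy.symm
  rw [hss] at hz
  exact mul_left_cancel hz

lemma tpT_injective {G : Type*} [Group G] (S : Set G) (H : Subgroup G) (lam : G → G)
    (hmaps : ∀ s ∈ S, lam s ∈ S)
    (hord : ∀ s ∈ S, lam (lam (lam s)) = s) :
    Function.Injective (tpT S H lam) := by
  classical
  intro f g hT
  funext p
  obtain ⟨c, O⟩ := p
  obtain ⟨hexist, hcard, hsub⟩ := O.2
  obtain ⟨s, hsS, hOeq⟩ := hexist
  have hsO : s ∈ (O : Set G) := by rw [hOeq]; left; rfl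
  -- the representative of the coset c
  set x := Quotient.out c with hx
  have hcx : (QuotientGroup.mk x : G ⧸ H) = c := QuotientGroup.out_eq' c
  -- lam s ≠ lam (lam s)
  have hne : lam s ≠ lam (lam s) := by
    intro heq
    have hO2 : (O : Set G) = {s, lam s} := by
      rw [hOeq]; ext u
      simp only [Set.mem_insert_iff, Set.mem_singleton_iff, ← heq]
      tauto
    have : (O : Set G).ncard ≤ 2 := by
      rw [hO2]
      exact (Set.ncard_insert_le s {lam s}).trans (by simp)
    omega
  -- the if-condition at (x, s) for any h is equivalent to h (c, O) = true
  have hiff : ∀ h : (G ⧸ H) × ↥(tpOrbs S H lam) → Bool,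
      (∃ O' : ↥(tpOrbs S H lam), s ∈ (O' : Set G) ∧ h (QuotientGroup.mk x, O') = true) ↔
        h (c, O) = true := by
    intro h
    constructor
    · rintro ⟨O', hsO', hh⟩
      have hO'eq := tp_orbit_eq S lam hmaps hord O'.2.1 hsO'
      have : O' = O := by
        apply Subtype.ext
        rw [hO'eq.2, hOeq]
      rw [← this, ← hcx]
      exact hh
    · intro hh
      exact ⟨O, hsO, by rw [hcx]; exact hh⟩
  have hmueq := tpMu_eq_of_tpT_eq S H lam f g hT x s hsS
  unfold tpMu at hmueq
  by_cases hf : f (c, O) = true <;> by_cases hg : g (c, O) = true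
  · rw [hf, hg]
  · rw [if_pos ((hiff f).mpr hf), if_neg (fun hc => hg ((hiff g).mp hc))] at hmueq
    exact absurd hmueq.symm hne
  · rw [if_neg (fun hc => hf ((hiff f).mp hc)), if_pos ((hiff g).mpr hg)] at hmueq
    exact absurd hmueq hne
  · simp [hf, hg]

/-- Given a bijection `λ : S → S` with `λ³ = id` and `s·λ(s)·λ²(s) = s·λ²(s)·λ(s) = 1`
for all `s ∈ S`, if `m` is the number of orbits of `λ` on `S` with exactly `3` elements
which are contained in `H`, then there are at least `2^{[G:H]·m}` triangle presentations
compatible with `F(G,S)`. -/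
theorem card_trianglePresentations_ge (G : Type*) [Group G] [Fintype G] (S : Set G)
    (H : Subgroup G) (lam : G → G)
    (hmaps : ∀ s ∈ S, lam s ∈ S)
    (hbij : Set.BijOn lam S S)
    (hord : ∀ s ∈ S, lam (lam (lam s)) = s)
    (h1 : ∀ s ∈ S, s * lam s * lam (lam s) = 1)
    (h2 : ∀ s ∈ S, s * lam (lam s) * lam s = 1)
    (m : ℕ)
    (hm : m = {O : Set G | (∃ s ∈ S, O = {s, lam s, lam (lam s)}) ∧
      O.ncard = 3 ∧ O ⊆ (H : Set G)}.ncard) :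
    2 ^ (H.index * m) ≤
      {T : Set (G × G × G) | IsTrianglePresentationG (FGS S) T}.ncard := by
  classical
  set P : Set (Set (G × G × G)) := {T | IsTrianglePresentationG (FGS S) T} with hP
  have hΩ : {O : Set G | (∃ s ∈ S, O = {s, lam s, lam (lam s)}) ∧
      O.ncard = 3 ∧ O ⊆ (H : Set G)} = tpOrbs S H lam := rfl
  rw [hΩ] at hm
  -- the injection
  have hinj : Function.Injective
      (fun f : (G ⧸ H) × ↥(tpOrbs S H lam) → Bool =>
        (⟨tpT S H lam f, tpT_isTP S H lam hmaps hord h1 h2 f⟩ : ↥P)) := by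
    intro f g hfg
    exact tpT_injective S H lam hmaps hord (Subtype.ext_iff.mp hfg)
  have hcard := Nat.card_le_card_of_injective _ hinj
  have hdom : Nat.card ((G ⧸ H) × ↥(tpOrbs S H lam) → Bool) = 2 ^ (H.index * m) := by
    rw [Nat.card_fun, Nat.card_prod, Nat.card_eq_fintype_card (α := Bool)]
    simp only [Fintype.card_bool]
    congr 1
    rw [hm, Nat.card_coe_set_eq]
    rfl
  rw [hdom] at hcard
  rwa [Nat.card_coe_set_eq] at hcard
end

section
/- Let q be a prime power, K a finite field with q elements, L a field extension of K with q³ elements, Tr = Tr_{L/K} the field trace, and α a generator of the cyclic group of units L×. Then the number of integers l with 0 ≤ l ≤ q² + q such that Tr(α^l) = 0 and q·l ≡ l (mod q²+q+1) is: exactly 2 if q ≡ 1 (mod 3), exactly 1 if q ≡ 0 (mod 3), and exactly 0 if q ≡ 2 (mod 3). Equivalently, the permutation of S = {l ∈ ℤ/(q²+q+1)ℤ : Tr(α^l) = 0} induced by multiplication by q has exactly R(q) orbits of length 3, where R(q) = (q−1)/3 if q ≡ 1 (mod 3), R(q) = q/3 if q ≡ 0 (mod 3), and R(q) = (q+1)/3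 if q ≡ 2 (mod 3). -/
/-- `R(q) = (q-1)/3, q/3, (q+1)/3` according to `q ≡ 1, 0, 2 (mod 3)`. -/
def Rq (q : ℕ) : ℕ :=
  if q % 3 = 1 then (q - 1) / 3 else if q % 3 = 0 then q / 3 else (q + 1) / 3

section Aux
variable {q : ℕ} {K L : Type*} [Field K] [Field L] [Algebra K L] [Fintype K] [Fintype L]

/-- Frobenius x ↦ x^q as a K-algebra hom of L. -/
noncomputable def frobAH (hK : Fintype.card K = q) : L →ₐ[K] L where
  toFun x := x ^ q
  map_one' := one_pow q
  map_mul' x y := mul_pow x y q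
  map_zero' := zero_pow (by rw [← hK]; exact Fintype.card_ne_zero)
  map_add' x y := by
    obtain ⟨p, hp⟩ := CharP.exists K
    haveI := hp
    haveI : CharP L p := charP_of_injective_algebraMap (algebraMap K L).injective p
    obtain ⟨n, hpp, hn⟩ := FiniteField.card K p
    haveI : Fact p.Prime := ⟨hpp⟩
    rw [← hK, hn]
    exact add_pow_char_pow ..
  commutes' c := by
    rw [← map_pow, ← hK, FiniteField.pow_card]

/-- Frobenius x ↦ x^q as a K-algebra equivalence of L. -/
noncomputable def frobAE (hK : Fintype.card K = q) : L ≃ₐ[K] L :=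
  AlgEquiv.ofBijective (frobAH hK)
    (Finite.injective_iff_bijective.mp (by exact RingHom.injective (frobAH (L := L) hK).toRingHom))

lemma frobAE_apply (hK : Fintype.card K = q) (x : L) : frobAE (L := L) hK x = x ^ q := rfl

end Aux

section Aux2
variable {q : ℕ} {K L : Type*} [Field K] [Field L] [Algebra K L] [Fintype K] [Fintype L]

lemma finrank_eq_three (hq2 : 2 ≤ q) (hK : Fintype.card K = q) (hL : Fintype.card L = q ^ 3) :
    Module.finrank K L = 3 := by
  have h := Module.card_eq_pow_finrank (K := K) (V := L)
  rw [hK, hL] at h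
  exact (Nat.pow_right_injective hq2 h.symm)

lemma trace_formula (hq2 : 2 ≤ q) (hK : Fintype.card K = q) (hL : Fintype.card L = q ^ 3)
    (α : Lˣ) (hα : ∀ u : Lˣ, u ∈ Subgroup.zpowers α) (x : L) :
    algebraMap K L (Algebra.trace K L x) = x + x ^ q + x ^ q ^ 2 := by
  haveI : FiniteDimensional K L := Module.Finite.of_basis (IsNoetherian.finsetBasis K L)
  have hN : orderOf α = q ^ 3 - 1 := by
    rw [orderOf_eq_card_of_forall_mem_zpowers hα, Nat.card_units, Nat.card_eq_fintype_card, hL]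
  have hq3 : 2 ≤ q ^ 3 := le_trans hq2 (Nat.le_self_pow (by norm_num) q)
  set σ : L ≃ₐ[K] L := frobAE hK with hσ
  -- σ ≠ 1
  have hne : σ ≠ 1 := by
    intro h
    have : (α : L) ^ q = (α : L) ^ 1 := by
      have := congrArg (fun f : L ≃ₐ[K] L => f (α : L)) h
      simpa [hσ, frobAE_apply] using this
    have : (α : L) ^ q = (α : L) := by simpa using this
    have hu : α ^ q = α ^ 1 := by ext; simpa using this
    rw [pow_eq_pow_iff_modEq, hN] at hu
    have hdvd := (Nat.modEq_iff_dvd' (by omega)).mp hu.symm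
    have hlt : q ^ 1 < q ^ 3 := Nat.pow_lt_pow_right (by omega) (by norm_num)
    rw [pow_one] at hlt
    have := Nat.le_of_dvd (by omega) hdvd
    omega
  classical
  have key : ∀ a b : ℕ, a < b → b - a < q ^ 3 - 1 → 0 < b - a → ¬ (α : L) ^ a = (α : L) ^ b := by
    intro a b hab hlt hpos h
    have hu : α ^ a = α ^ b := by ext; simpa using h
    rw [pow_eq_pow_iff_modEq, hN] at hu
    have hdvd := (Nat.modEq_iff_dvd' (le_of_lt hab)).mp hu
    have := Nat.le_of_dvd hpos hdvd
    omega
  have hq1 : 1 < q := hq2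
  have hqq : q < q ^ 2 := by
    have := Nat.pow_lt_pow_right hq1 (by norm_num : 1 < 2)
    simpa using this
  have hq2q3 : q ^ 2 < q ^ 3 := Nat.pow_lt_pow_right hq1 (by norm_num)
  have hσ2_apply : ∀ y : L, (σ ^ 2) y = y ^ q ^ 2 := by
    intro y
    have : (σ ^ 2) y = σ (σ y) := by rw [pow_two]; rfl
    rw [this, frobAE_apply, frobAE_apply, ← pow_mul, pow_two]
  have hne2 : σ ^ 2 ≠ 1 := by
    intro h
    have : (α : L) ^ 1 = (α : L) ^ q ^ 2 := by
      have := congrArg (fun f : L ≃ₐ[K] L => f (α : L)) h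
      simp only [hσ2_apply, AlgEquiv.one_apply] at this
      simpa using this.symm
    exact key 1 (q ^ 2) (by omega) (by omega) (by omega) this
  have hne12 : σ ≠ σ ^ 2 := by
    intro h
    have : (α : L) ^ q = (α : L) ^ q ^ 2 := by
      have := congrArg (fun f : L ≃ₐ[K] L => f (α : L)) h
      simp only [hσ2_apply] at this
      simpa [hσ, frobAE_apply] using this
    exact key q (q ^ 2) hqq (by omega) (by omega) this
  have hcard : Fintype.card (L ≃ₐ[K] L) = 3 := by
    rw [← Nat.card_eq_fintype_card, IsGalois.card_aut_eq_finrank, finrank_eq_three hq2 hK hL]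
  have huniv : (Finset.univ : Finset (L ≃ₐ[K] L)) = {1, σ, σ ^ 2} := by
    symm
    apply Finset.eq_univ_of_card
    rw [hcard]
    rw [Finset.card_insert_of_notMem (by simp [hne.symm, hne2.symm]),
      Finset.card_insert_of_notMem (by simp [hne12]), Finset.card_singleton]
  rw [trace_eq_sum_automorphisms, huniv]
  rw [Finset.sum_insert (by simp [hne.symm, hne2.symm]), Finset.sum_insert (by simp [hne12]),
    Finset.sum_singleton]
  rw [AlgEquiv.one_apply, frobAE_apply, hσ2_apply, add_assoc]

end Aux2

section Aux3
variable {q : ℕ} {K L : Type*} [Field K] [Field L] [Algebra K L] [Fintype K] [Fintype L]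

lemma order_alpha (hL : Fintype.card L = q ^ 3)
    (α : Lˣ) (hα : ∀ u : Lˣ, u ∈ Subgroup.zpowers α) : orderOf α = q ^ 3 - 1 := by
  rw [orderOf_eq_card_of_forall_mem_zpowers hα, Nat.card_units, Nat.card_eq_fintype_card, hL]

lemma trace_zero_iff (hq2 : 2 ≤ q) (hK : Fintype.card K = q) (hL : Fintype.card L = q ^ 3)
    (α : Lˣ) (hα : ∀ u : Lˣ, u ∈ Subgroup.zpowers α) (x : L) :
    Algebra.trace K L x = 0 ↔ x + x ^ q + x ^ q ^ 2 = 0 := by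
  rw [← trace_formula hq2 hK hL α hα x]
  constructor
  · intro h; rw [h, map_zero]
  · intro h
    exact (map_eq_zero_iff _ (algebraMap K L).injective).mp h

lemma nid (hq2 : 2 ≤ q) : (q - 1) * (q ^ 2 + q + 1) = q ^ 3 - 1 := by
  have h1 : 1 ≤ q := by omega
  have h3 : 1 ≤ q ^ 3 := Nat.one_le_pow _ _ (by omega)
  zify [h1, h3]
  ring

lemma trace_exp_step (hq2 : 2 ≤ q) (hK : Fintype.card K = q) (hL : Fintype.card L = q ^ 3)
    (α : Lˣ) (hα : ∀ u : Lˣ, u ∈ Subgroup.zpowers α) (b c : ℕ) :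
    Algebra.trace K L ((α : L) ^ (b + (q ^ 2 + q + 1) * c)) = 0 ↔
      Algebra.trace K L ((α : L) ^ b) = 0 := by
  have hN := order_alpha hL α hα
  have h3 : 1 ≤ q ^ 3 := Nat.one_le_pow _ _ (by omega)
  have hy : ((α : L) ^ (q ^ 2 + q + 1)) ^ q = (α : L) ^ (q ^ 2 + q + 1) := by
    rw [← pow_mul]
    have he : (q ^ 2 + q + 1) * q = (q ^ 2 + q + 1) + (q ^ 3 - 1) := by zify [h3]; ring
    have h1 : (α : L) ^ (q ^ 3 - 1) = 1 := by
      rw [← hN, ← Units.val_pow_eq_pow_val, pow_orderOf_eq_one, Units.val_one]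
    rw [he, pow_add, h1, mul_one]
  set x := (α : L) ^ b with hx
  set y := (α : L) ^ (q ^ 2 + q + 1) with hyd
  have hcq : (y ^ c) ^ q = y ^ c := by rw [← pow_mul, mul_comm, pow_mul, hy]
  have hcq2 : (y ^ c) ^ q ^ 2 = y ^ c := by
    rw [pow_two, pow_mul, hcq, hcq]
  have hyne : y ^ c ≠ 0 := pow_ne_zero _ (pow_ne_zero _ (Units.ne_zero α))
  have hsplit : (α : L) ^ (b + (q ^ 2 + q + 1) * c) = x * y ^ c := by
    rw [pow_add, pow_mul]
  rw [hsplit, trace_zero_iff hq2 hK hL α hα, trace_zero_iff hq2 hK hL α hα]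
  rw [mul_pow, mul_pow, hcq, hcq2]
  constructor
  · intro h
    have h2 : (x + x ^ q + x ^ q ^ 2) * y ^ c = 0 := by linear_combination h
    exact (mul_eq_zero.mp h2).resolve_right hyne
  · intro h
    linear_combination y ^ c * h

lemma trace_exp_congr (hq2 : 2 ≤ q) (hK : Fintype.card K = q) (hL : Fintype.card L = q ^ 3)
    (α : Lˣ) (hα : ∀ u : Lˣ, u ∈ Subgroup.zpowers α) (a b : ℕ)
    (h : a ≡ b [MOD q ^ 2 + q + 1]) :
    Algebra.trace K L ((α : L) ^ a) = 0 ↔ Algebra.trace K L ((α : L) ^ b) = 0 := by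
  have ha := trace_exp_step hq2 hK hL α hα (a % (q ^ 2 + q + 1)) (a / (q ^ 2 + q + 1))
  rw [Nat.mod_add_div] at ha
  have hb := trace_exp_step hq2 hK hL α hα (b % (q ^ 2 + q + 1)) (b / (q ^ 2 + q + 1))
  rw [Nat.mod_add_div] at hb
  rw [ha, hb, show a % (q ^ 2 + q + 1) = b % (q ^ 2 + q + 1) from h]

lemma trace_frob (hq2 : 2 ≤ q) (hK : Fintype.card K = q) (hL : Fintype.card L = q ^ 3)
    (α : Lˣ) (hα : ∀ u : Lˣ, u ∈ Subgroup.zpowers α) (x : L) :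
    Algebra.trace K L (x ^ q) = 0 ↔ Algebra.trace K L x = 0 := by
  rw [trace_zero_iff hq2 hK hL α hα, trace_zero_iff hq2 hK hL α hα]
  rw [← pow_mul, ← pow_mul]
  have h3 : x ^ (q * q ^ 2) = x := by
    rw [show q * q ^ 2 = q ^ 3 by ring, ← hL, FiniteField.pow_card]
  rw [h3, show q * q = q ^ 2 by ring]
  constructor <;> intro h <;> linear_combination h

lemma three_zero_iff (hq2 : 2 ≤ q) (hK : Fintype.card K = q) : (3 : K) = 0 ↔ q % 3 = 0 := by
  obtain ⟨p, hp⟩ := CharP.exists K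
  haveI := hp
  obtain ⟨k, hpp, hcard⟩ := FiniteField.card K p
  rw [hK] at hcard
  have h1 : (3 : K) = 0 ↔ p ∣ 3 := by
    have := CharP.cast_eq_zero_iff K p 3
    simpa using this
  have h2 : p ∣ 3 ↔ p = 3 := (Nat.prime_dvd_prime_iff_eq hpp (by norm_num))
  have h3 : q % 3 = 0 ↔ (3 : ℕ) ∣ q := by omega
  rw [h1, h2, h3, hcard]
  constructor
  · intro h; rw [h]; exact dvd_pow_self 3 k.ne_zero
  · intro hdvd
    have := (Nat.Prime.dvd_of_dvd_pow (by norm_num : Nat.Prime 3) hdvd)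
    exact ((Nat.prime_dvd_prime_iff_eq (by norm_num) hpp).mp this).symm

lemma trace_one_zero_iff (hq2 : 2 ≤ q) (hK : Fintype.card K = q) (hL : Fintype.card L = q ^ 3)
    (α : Lˣ) (hα : ∀ u : Lˣ, u ∈ Subgroup.zpowers α) :
    (Algebra.trace K L ((α : L) ^ 0) = 0) ↔ q % 3 = 0 := by
  rw [pow_zero, trace_zero_iff hq2 hK hL α hα, one_pow, one_pow]
  rw [show (1 : L) + 1 + 1 = (3 : L) by norm_num,
    show (3 : L) = algebraMap K L 3 by rw [map_ofNat],
    map_eq_zero_iff _ (algebraMap K L).injective]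
  exact three_zero_iff hq2 hK

lemma trace_m_zero (hq2 : 2 ≤ q) (hK : Fintype.card K = q) (hL : Fintype.card L = q ^ 3)
    (α : Lˣ) (hα : ∀ u : Lˣ, u ∈ Subgroup.zpowers α) (h1 : q % 3 = 1)
    (e : ℕ) (he : e = 1 ∨ e = 2) :
    Algebra.trace K L ((α : L) ^ (e * ((q ^ 2 + q + 1) / 3))) = 0 := by
  obtain ⟨t, ht⟩ : ∃ t, q = 3 * t + 1 := ⟨q / 3, by omega⟩
  have hq4 : 4 ≤ q := by omega
  set m := (q ^ 2 + q + 1) / 3 with hmd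
  have hdvd : q ^ 2 + q + 1 = 3 * (3 * t * t + 3 * t + 1) := by rw [ht]; ring
  have hm3 : 3 * m = q ^ 2 + q + 1 := by
    rw [hmd]
    exact Nat.mul_div_cancel' ⟨_, hdvd⟩ 
  have hm1 : 1 ≤ m := by omega
  have hN := order_alpha hL α hα
  have hNid : (q - 1) * (q ^ 2 + q + 1) = q ^ 3 - 1 := nid hq2
  set ζ : Lˣ := α ^ (m * (q - 1)) with hζ
  have hζ3 : ζ ^ 3 = 1 := by
    rw [hζ, ← pow_mul, show m * (q - 1) * 3 = (q - 1) * (3 * m) by ring, hm3, hNid, ← hN,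
      pow_orderOf_eq_one]
  have hζne : ζ ≠ 1 := by
    intro h
    have hd : orderOf α ∣ m * (q - 1) := orderOf_dvd_of_pow_eq_one h
    rw [hN] at hd
    have hlt : m * (q - 1) < q ^ 3 - 1 := by
      rw [← hNid, ← hm3]
      have h0 : 0 < q - 1 := by omega
      nlinarith [hm1, h0]
    have hpos : 0 < m * (q - 1) := Nat.mul_pos (by omega) (by omega)
    have := Nat.le_of_dvd hpos hd
    omega
  set z : L := ((ζ : L)) with hz
  have hzval : z = (α : L) ^ (m * (q - 1)) := by rw [hz, hζ, Units.val_pow_eq_pow_val]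
  have hz3 : z ^ 3 = 1 := by rw [hz, ← Units.val_pow_eq_pow_val, hζ3, Units.val_one]
  have hzne : z ≠ 1 := fun h => hζne (Units.ext h)
  have hsum : 1 + z + z ^ 2 = 0 := by
    have h0 : (z - 1) * (1 + z + z ^ 2) = 0 := by linear_combination hz3
    rcases mul_eq_zero.mp h0 with h | h
    · exact absurd (sub_eq_zero.mp h) hzne
    · exact h
  rw [trace_zero_iff hq2 hK hL α hα]
  set x : L := (α : L) ^ (e * m) with hxd
  have hxq : x ^ q = x * z ^ e := by
    rw [hxd, ← pow_mul]
    have hid : e * m * q = e * m + m * (q - 1) * e := by zify [show 1 ≤ q by omega]; ring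
    rw [hid, pow_add, hzval, ← pow_mul, ← hxd]
  have hxq2 : x ^ q ^ 2 = x * z ^ (e * (q + 1)) := by
    rw [hxd, ← pow_mul]
    have hid : e * m * q ^ 2 = e * m + m * (q - 1) * (e * (q + 1)) := by
      zify [show 1 ≤ q by omega]; ring
    rw [hid, pow_add, hzval, ← pow_mul, ← hxd]
  rw [hxq, hxq2]
  rcases he with rfl | rfl
  · have hzq : z ^ (1 * (q + 1)) = z ^ 2 := by
      rw [show 1 * (q + 1) = 3 * t + 2 by omega, pow_add, pow_mul, hz3, one_pow, one_mul]
    rw [hzq, pow_one]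
    linear_combination x * hsum
  · have hzq : z ^ (2 * (q + 1)) = z := by
      rw [show 2 * (q + 1) = 3 * (2 * t + 1) + 1 by omega, pow_add, pow_mul, hz3, one_pow,
        one_mul, pow_one]
    rw [hzq]
    linear_combination x * hsum

lemma card_Sf (hq2 : 2 ≤ q) (hK : Fintype.card K = q) (hL : Fintype.card L = q ^ 3)
    (α : Lˣ) (hα : ∀ u : Lˣ, u ∈ Subgroup.zpowers α)
    [DecidablePred fun s : ZMod (q ^ 2 + q + 1) =>
      Algebra.trace K L ((α : L) ^ s.val) = 0] :
    (Finset.univ.filter fun s : ZMod (q ^ 2 + q + 1) =>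
      Algebra.trace K L ((α : L) ^ s.val) = 0).card = q + 1 := by
  classical
  haveI : FiniteDimensional K L :=
    Module.Finite.of_basis (IsNoetherian.finsetBasis K L)
  haveI : NeZero (q ^ 2 + q + 1) := ⟨by omega⟩
  have hnpos : 0 < q ^ 2 + q + 1 := by omega
  have hN := order_alpha hL α hα
  have hNid := nid (q := q) hq2
  have hq3 : 7 ≤ q ^ 3 := by
    have : 2 ^ 3 ≤ q ^ 3 := Nat.pow_le_pow_left hq2 3
    omega
  -- cardinality of the kernel of the trace
  have hsurj : Function.Surjective (Algebra.trace K L) := Algebra.trace_surjective K L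
  have hrange : LinearMap.range (Algebra.trace K L) = ⊤ := LinearMap.range_eq_top.mpr hsurj
  have hfr : Module.finrank K (LinearMap.ker (Algebra.trace K L)) = 2 := by
    have h := LinearMap.finrank_range_add_finrank_ker (Algebra.trace K L)
    rw [hrange, finrank_top, Module.finrank_self, finrank_eq_three hq2 hK hL] at h
    omega
  have hker : Nat.card (LinearMap.ker (Algebra.trace K L)) = q ^ 2 := by
    rw [Nat.card_eq_fintype_card, Module.card_eq_pow_finrank (K := K), hK, hfr]
  have hTzcard : (Finset.univ.filter fun x : L => Algebra.trace K L x = 0).card = q ^ 2 := by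
    rw [← Fintype.card_subtype, ← Nat.card_eq_fintype_card, ← hker]
    exact Nat.card_congr (Equiv.subtypeEquivRight (fun x => by simp [LinearMap.mem_ker])).symm
  have h0mem : (0 : L) ∈ Finset.univ.filter fun x : L => Algebra.trace K L x = 0 := by
    simp
  -- units with zero trace
  have hUz : (Finset.univ.filter fun x : Lˣ => Algebra.trace K L (x : L) = 0).card
      = q ^ 2 - 1 := by
    have hbij : (Finset.univ.filter fun x : Lˣ => Algebra.trace K L (x : L) = 0).card
        = ((Finset.univ.filter fun x : L => Algebra.trace K L x = 0).erase 0).card := by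
      refine Finset.card_bij (fun x _ => (x : L)) ?_ ?_ ?_
      · intro x hx
        rw [Finset.mem_filter] at hx
        exact Finset.mem_erase.mpr ⟨Units.ne_zero x, by simp [hx.2]⟩
      · intro a _ b _ h
        exact Units.ext h
      · intro y hy
        rw [Finset.mem_erase, Finset.mem_filter] at hy
        refine ⟨Units.mk0 y hy.1, ?_, rfl⟩
        simp [hy.2.2]
    rw [hbij, Finset.card_erase_of_mem h0mem, hTzcard]
  -- exponents in range (q^3 - 1) with zero trace
  have hA : ((Finset.range (q ^ 3 - 1)).filter
      fun l : ℕ => Algebra.trace K L ((α : L) ^ l) = 0).card = q ^ 2 - 1 := by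
    rw [← hUz]
    apply Finset.card_bij (fun l _ => α ^ l)
    · intro l hl
      rw [Finset.mem_filter] at hl
      rw [Finset.mem_filter]
      refine ⟨Finset.mem_univ _, ?_⟩
      rw [Units.val_pow_eq_pow_val]
      exact hl.2
    · intro a ha b hb h
      rw [Finset.mem_filter, Finset.mem_range] at ha hb
      exact pow_injOn_Iio_orderOf (by rw [hN]; exact ha.1) (by rw [hN]; exact hb.1) h
    · intro x hx
      rw [Finset.mem_filter] at hx
      obtain ⟨k, hk⟩ := (Submonoid.mem_powers_iff _ _).mp
        ((isOfFinOrder_of_finite α).mem_powers_iff_mem_zpowers.mpr (hα x))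
      refine ⟨k % (q ^ 3 - 1), ?_, ?_⟩
      · rw [Finset.mem_filter, Finset.mem_range]
        have hpk : α ^ (k % (q ^ 3 - 1)) = α ^ k := by
          rw [pow_eq_pow_iff_modEq, hN]
          exact Nat.mod_modEq k _
        constructor
        · exact Nat.mod_lt _ (by omega)
        · rw [← Units.val_pow_eq_pow_val, hpk, hk]
          exact hx.2
      · rw [← hk, pow_eq_pow_iff_modEq, hN]
        exact Nat.mod_modEq k _
  -- fibration over ZMod (q^2+q+1)
  have hfib : ((Finset.range (q ^ 3 - 1)).filter
      fun l : ℕ => Algebra.trace K L ((α : L) ^ l) = 0).card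
      = ((Finset.univ.filter fun s : ZMod (q ^ 2 + q + 1) =>
          Algebra.trace K L ((α : L) ^ s.val) = 0) ×ˢ Finset.range (q - 1)).card := by
    refine Finset.card_nbij' (fun l => ((l : ZMod (q ^ 2 + q + 1)), l / (q ^ 2 + q + 1)))
      (fun p => p.1.val + (q ^ 2 + q + 1) * p.2) ?_ ?_ ?_ ?_
    · intro l hl
      rw [Finset.mem_coe, Finset.mem_filter, Finset.mem_range] at hl
      show ((l : ZMod (q ^ 2 + q + 1)), l / (q ^ 2 + q + 1)) ∈ _
      rw [Finset.mem_coe, Finset.mem_product, Finset.mem_filter, Finset.mem_range]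
      refine ⟨⟨Finset.mem_univ _, ?_⟩, ?_⟩
      · rw [ZMod.val_natCast]
        exact (trace_exp_congr hq2 hK hL α hα _ _ (Nat.mod_modEq l _)).mpr hl.2
      · rw [Nat.div_lt_iff_lt_mul hnpos]
        calc l < q ^ 3 - 1 := hl.1
        _ = (q - 1) * (q ^ 2 + q + 1) := hNid.symm
    · intro p hp
      rw [Finset.mem_coe, Finset.mem_product, Finset.mem_filter, Finset.mem_range] at hp
      show p.1.val + (q ^ 2 + q + 1) * p.2 ∈ _
      rw [Finset.mem_coe, Finset.mem_filter, Finset.mem_range]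
      constructor
      · have h1 : p.1.val < q ^ 2 + q + 1 := ZMod.val_lt p.1
        have h2 : p.2 + 1 ≤ q - 1 := hp.2
        calc p.1.val + (q ^ 2 + q + 1) * p.2 < (q ^ 2 + q + 1) * (p.2 + 1) := by
              rw [Nat.mul_succ]; omega
        _ ≤ (q ^ 2 + q + 1) * (q - 1) := Nat.mul_le_mul_left _ h2
        _ = q ^ 3 - 1 := by rw [mul_comm]; exact hNid
      · exact (trace_exp_step hq2 hK hL α hα _ _).mpr hp.1.2
    · intro l hl
      simp only
      rw [ZMod.val_natCast, Nat.mod_add_div]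
    · intro p hp
      have h1 : p.1.val < q ^ 2 + q + 1 := ZMod.val_lt p.1
      show (((p.1.val + (q ^ 2 + q + 1) * p.2 : ℕ) : ZMod (q ^ 2 + q + 1)),
        (p.1.val + (q ^ 2 + q + 1) * p.2) / (q ^ 2 + q + 1)) = p
      refine Prod.ext ?_ ?_
      · show ((p.1.val + (q ^ 2 + q + 1) * p.2 : ℕ) : ZMod (q ^ 2 + q + 1)) = p.1
        rw [Nat.cast_add, Nat.cast_mul, ZMod.natCast_self, zero_mul, add_zero]
        exact ZMod.natCast_rightInverse p.1
      · show (p.1.val + (q ^ 2 + q + 1) * p.2) / (q ^ 2 + q + 1) = p.2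
        rw [Nat.add_mul_div_left _ _ hnpos, Nat.div_eq_of_lt h1, zero_add]
  rw [hfib, Finset.card_product, Finset.card_range] at hA
  have hq21 : q ^ 2 - 1 = (q + 1) * (q - 1) := by
    zify [show 1 ≤ q by omega, show 1 ≤ q ^ 2 from Nat.one_le_pow _ _ (by omega)]
    ring
  rw [hq21] at hA
  exact Nat.eq_of_mul_eq_mul_right (by omega) hA

lemma classify_fixed (hq2 : 2 ≤ q) {l : ℕ} (hl : l < q ^ 2 + q + 1)
    (h : q * l ≡ l [MOD q ^ 2 + q + 1]) :
    l = 0 ∨ (q % 3 = 1 ∧ (l = (q ^ 2 + q + 1) / 3 ∨ l = 2 * ((q ^ 2 + q + 1) / 3))) := by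
  have hdvd : (q ^ 2 + q + 1) ∣ (q - 1) * l := by
    have h1 : l ≤ q * l := Nat.le_mul_of_pos_left l (by omega)
    have h2 := (Nat.modEq_iff_dvd' h1).mp h.symm
    have h3 : q * l - l = (q - 1) * l := by
      rw [Nat.sub_mul, one_mul]
    rwa [h3] at h2
  have hgcd : Nat.gcd (q - 1) (q ^ 2 + q + 1) = Nat.gcd (q - 1) 3 := by
    have hid : q ^ 2 + q + 1 = 3 + (q + 2) * (q - 1) := by zify [show 1 ≤ q by omega]; ring
    rw [hid, Nat.gcd_add_mul_right_right]
  by_cases h1 : q % 3 = 1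
  · obtain ⟨t, ht⟩ : ∃ t, q = 3 * t + 1 := ⟨q / 3, by omega⟩
    have hdvd3 : q ^ 2 + q + 1 = 3 * (3 * t * t + 3 * t + 1) := by rw [ht]; ring
    set m := (q ^ 2 + q + 1) / 3 with hmd
    have hm3 : 3 * m = q ^ 2 + q + 1 := Nat.mul_div_cancel' ⟨_, hdvd3⟩
    have hm1 : 1 ≤ m := by omega
    have htl : m ∣ t * l := by
      obtain ⟨c, hc⟩ := hdvd
      refine ⟨c, ?_⟩
      have hc2 : 3 * (t * l) = 3 * (m * c) := by
        calc 3 * (t * l) = (q - 1) * l := by rw [show q - 1 = 3 * t from by omega]; ring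
        _ = (q ^ 2 + q + 1) * c := hc
        _ = 3 * (m * c) := by rw [← hm3]; ring
      omega
    have hcop : Nat.Coprime m t := by
      have h3d : (3 : ℕ) ∣ q - 1 := by omega
      have hgg : Nat.gcd (q - 1) (q ^ 2 + q + 1) = 3 := by
        rw [hgcd, Nat.gcd_comm, Nat.gcd_eq_left h3d]
      have hgtm : 3 * Nat.gcd t m = 3 := by
        rw [← Nat.gcd_mul_left, show 3 * t = q - 1 from by omega, hm3, hgg]
      have : Nat.gcd t m = 1 := by omega
      exact Nat.Coprime.symm this
    have hml : m ∣ l := hcop.dvd_of_dvd_mul_left htl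
    obtain ⟨c, hc⟩ := hml
    have hc3 : c < 3 := by
      by_contra hcc
      push_neg at hcc
      have h3m : 3 * m ≤ m * c := by
        calc 3 * m ≤ c * m := Nat.mul_le_mul_right m hcc
        _ = m * c := mul_comm _ _
      omega
    have : c = 0 ∨ c = 1 ∨ c = 2 := by omega
    rcases this with rfl | rfl | rfl
    · left; simpa using hc
    · right; exact ⟨h1, Or.inl (by rw [hc, mul_one])⟩
    · right; exact ⟨h1, Or.inr (by rw [hc]; ring)⟩
  · left
    have hg3 : Nat.gcd (q - 1) 3 = 1 := by
      rw [Nat.gcd_comm]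
      exact (Nat.Prime.coprime_iff_not_dvd (by norm_num)).mpr (by omega)
    have hcop : Nat.Coprime (q ^ 2 + q + 1) (q - 1) := by
      have : Nat.gcd (q ^ 2 + q + 1) (q - 1) = 1 := by rw [Nat.gcd_comm, hgcd, hg3]
      exact this
    have hdl : (q ^ 2 + q + 1) ∣ l := hcop.dvd_of_dvd_mul_left hdvd
    exact Nat.eq_zero_of_dvd_of_lt hdl hl

lemma fixed_mem (hq2 : 2 ≤ q) (h1 : q % 3 = 1) (e : ℕ) :
    q * (e * ((q ^ 2 + q + 1) / 3)) ≡ e * ((q ^ 2 + q + 1) / 3) [MOD q ^ 2 + q + 1] := by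
  obtain ⟨t, ht⟩ : ∃ t, q = 3 * t + 1 := ⟨q / 3, by omega⟩
  have hdvd3 : q ^ 2 + q + 1 = 3 * (3 * t * t + 3 * t + 1) := by rw [ht]; ring
  have hm3 : 3 * ((q ^ 2 + q + 1) / 3) = q ^ 2 + q + 1 := Nat.mul_div_cancel' ⟨_, hdvd3⟩
  set m := (q ^ 2 + q + 1) / 3 with hmd
  have hkey : q * (e * m) = e * m + (q ^ 2 + q + 1) * (t * e) := by
    rw [← hm3, ht]; ring
  show q * (e * m) % (q ^ 2 + q + 1) = (e * m) % (q ^ 2 + q + 1)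
  rw [hkey]
  exact Nat.add_mul_mod_self_left _ _ _

end Aux3

/-- For `K` a finite field with `q` elements, `L/K` with `|L| = q³` and `α` a generator
of `Lˣ`: the number of `0 ≤ l ≤ q² + q` with `Tr_{L/K}(α^l) = 0` and
`q·l ≡ l (mod q²+q+1)` is `2`, `1` or `0` according to `q ≡ 1, 0, 2 (mod 3)`;
equivalently, the permutation of `S = {l ∈ ℤ/(q²+q+1)ℤ : Tr_{L/K}(α^l) = 0}` induced by
multiplication by `q` has exactly `R(q)` orbits of length `3`. -/
theorem trace_zero_fixed_points_and_orbits (q : ℕ) (hq : IsPrimePow q) (K L : Type*)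
    [Field K] [Field L] [Algebra K L] [Fintype K] [Fintype L]
    (hK : Fintype.card K = q) (hL : Fintype.card L = q ^ 3)
    (α : Lˣ) (hα : ∀ u : Lˣ, u ∈ Subgroup.zpowers α) :
    {l : ℕ | l ≤ q ^ 2 + q ∧ Algebra.trace K L ((α : L) ^ l) = 0 ∧
        q * l ≡ l [MOD q ^ 2 + q + 1]}.ncard =
      (if q % 3 = 1 then 2 else if q % 3 = 0 then 1 else 0) ∧
    {O : Set (ZMod (q ^ 2 + q + 1)) |
        (∃ s : ZMod (q ^ 2 + q + 1), Algebra.trace K L ((α : L) ^ s.val) = 0 ∧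
          O = {s, (q : ZMod (q ^ 2 + q + 1)) * s, (q : ZMod (q ^ 2 + q + 1)) ^ 2 * s}) ∧
        O.ncard = 3}.ncard = Rq q := by
  classical
  have hq2 : 2 ≤ q := hq.two_le
  haveI : NeZero (q ^ 2 + q + 1) := ⟨by omega⟩
  constructor
  · by_cases h1 : q % 3 = 1
    · rw [if_pos h1]
      obtain ⟨t, ht⟩ : ∃ t, q = 3 * t + 1 := ⟨q / 3, by omega⟩
      have hdvd3 : q ^ 2 + q + 1 = 3 * (3 * t * t + 3 * t + 1) := by rw [ht]; ring
      have hm3 : 3 * ((q ^ 2 + q + 1) / 3) = q ^ 2 + q + 1 := Nat.mul_div_cancel' ⟨_, hdvd3⟩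
      set m := (q ^ 2 + q + 1) / 3 with hmd
      have hm1 : 1 ≤ m := by omega
      have hset : {l : ℕ | l ≤ q ^ 2 + q ∧ Algebra.trace K L ((α : L) ^ l) = 0 ∧
          q * l ≡ l [MOD q ^ 2 + q + 1]} = {m, 2 * m} := by
        ext l
        simp only [Set.mem_setOf_eq, Set.mem_insert_iff, Set.mem_singleton_iff]
        constructor
        · rintro ⟨hle, htr, hmod⟩
          rcases classify_fixed hq2 (by omega) hmod with rfl | ⟨-, hcase⟩
          · exact absurd ((trace_one_zero_iff hq2 hK hL α hα).mp htr) (by omega)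
          · exact hcase
        · rintro (rfl | rfl)
          · refine ⟨by omega, ?_, ?_⟩
            · have := trace_m_zero hq2 hK hL α hα h1 1 (Or.inl rfl)
              rwa [one_mul] at this
            · have := fixed_mem hq2 h1 1
              rwa [one_mul] at this
          · refine ⟨by omega, ?_, ?_⟩
            · exact trace_m_zero hq2 hK hL α hα h1 2 (Or.inr rfl)
            · exact fixed_mem hq2 h1 2
      rw [hset]
      exact Set.ncard_pair (by omega)
    · rw [if_neg h1]
      by_cases h0 : q % 3 = 0
      · rw [if_pos h0]
        have hset : {l : ℕ | l ≤ q ^ 2 + q ∧ Algebra.trace K L ((α : L) ^ l) = 0 ∧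
            q * l ≡ l [MOD q ^ 2 + q + 1]} = {0} := by
          ext l
          simp only [Set.mem_setOf_eq, Set.mem_singleton_iff]
          constructor
          · rintro ⟨hle, htr, hmod⟩
            rcases classify_fixed hq2 (by omega) hmod with rfl | ⟨hq1, -⟩
            · rfl
            · omega
          · rintro rfl
            exact ⟨by omega, (trace_one_zero_iff hq2 hK hL α hα).mpr h0,
              by rw [mul_zero]⟩
        rw [hset, Set.ncard_singleton]
      · rw [if_neg h0]
        have hset : {l : ℕ | l ≤ q ^ 2 + q ∧ Algebra.trace K L ((α : L) ^ l) = 0 ∧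
            q * l ≡ l [MOD q ^ 2 + q + 1]} = ∅ := by
          ext l
          simp only [Set.mem_setOf_eq, Set.mem_empty_iff_false, iff_false, not_and]
          intro hle htr hmod
          rcases classify_fixed hq2 (by omega) hmod with rfl | ⟨hq1, -⟩
          · exact h0 ((trace_one_zero_iff hq2 hK hL α hα).mp htr)
          · exact h1 hq1
        rw [hset]
        exact Set.ncard_empty _
  · have hNid := nid (q := q) hq2
    have hq3 : 7 ≤ q ^ 3 := by
      have := Nat.pow_le_pow_left hq2 3
      omega
    set u : ZMod (q ^ 2 + q + 1) := (q : ZMod (q ^ 2 + q + 1)) with hu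
    have hu3 : u ^ 3 = 1 := by
      have hmod : q ^ 3 ≡ 1 [MOD q ^ 2 + q + 1] := by
        have hdv : (q ^ 2 + q + 1) ∣ q ^ 3 - 1 := ⟨q - 1, by rw [← hNid]; ring⟩
        exact ((Nat.modEq_iff_dvd' (by omega)).mpr hdv).symm
      have hcast := (ZMod.natCast_eq_natCast_iff _ _ _).mpr hmod
      rw [hu]
      push_cast at hcast
      exact hcast
    have hcancel : ∀ a b : ZMod (q ^ 2 + q + 1), u * a = u * b → a = b := by
      intro a b hab
      have h2 : u ^ 2 * (u * a) = u ^ 2 * (u * b) := by rw [hab]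
      rwa [← mul_assoc, ← mul_assoc, ← pow_succ, hu3, one_mul, one_mul] at h2
    have hvalmul : ∀ s : ZMod (q ^ 2 + q + 1),
        (Algebra.trace K L ((α : L) ^ (u * s).val) = 0) ↔
          Algebra.trace K L ((α : L) ^ s.val) = 0 := by
      intro s
      have hus : u * s = ((q * s.val : ℕ) : ZMod (q ^ 2 + q + 1)) := by
        rw [hu]
        push_cast
        rw [ZMod.natCast_val, ZMod.cast_id]
      rw [hus, ZMod.val_natCast]
      rw [trace_exp_congr hq2 hK hL α hα _ _ (Nat.mod_modEq _ _)]
      rw [show q * s.val = s.val * q from mul_comm _ _, pow_mul]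
      exact trace_frob hq2 hK hL α hα _
    have hfixiff : ∀ s : ZMod (q ^ 2 + q + 1),
        u * s = s ↔ q * s.val ≡ s.val [MOD q ^ 2 + q + 1] := by
      intro s
      have hus : u * s = ((q * s.val : ℕ) : ZMod (q ^ 2 + q + 1)) := by
        rw [hu]
        push_cast
        rw [ZMod.natCast_val, ZMod.cast_id]
      have hs' : ((s.val : ℕ) : ZMod (q ^ 2 + q + 1)) = s := ZMod.natCast_rightInverse s
      constructor
      · intro h
        exact (ZMod.natCast_eq_natCast_iff _ _ _).mp (by rw [hs', ← hus, h])
      · intro h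
        rw [hus]
        have hc := (ZMod.natCast_eq_natCast_iff _ _ _).mpr h
        rw [hc]
        exact hs'
    set Sf := Finset.univ.filter
      (fun s : ZMod (q ^ 2 + q + 1) => Algebra.trace K L ((α : L) ^ s.val) = 0) with hSfd
    have hSfcard : Sf.card = q + 1 := card_Sf hq2 hK hL α hα
    set Fix := Sf.filter (fun s => u * s = s) with hFixd
    set Mov := Sf \ Fix with hMovd
    have hMovSf : ∀ s ∈ Mov, s ∈ Sf ∧ u * s ≠ s := by
      intro s hs
      rw [hMovd, Finset.mem_sdiff] at hs
      refine ⟨hs.1, fun h => hs.2 ?_⟩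
      rw [hFixd, Finset.mem_filter]
      exact ⟨hs.1, h⟩
    have hSfu : ∀ s ∈ Sf, u * s ∈ Sf := by
      intro s hs
      rw [hSfd, Finset.mem_filter] at hs ⊢
      exact ⟨Finset.mem_univ _, (hvalmul s).mpr hs.2⟩
    have hMovu : ∀ s ∈ Mov, u * s ∈ Mov := by
      intro s hs
      obtain ⟨hsf, hnf⟩ := hMovSf s hs
      rw [hMovd, Finset.mem_sdiff]
      refine ⟨hSfu s hsf, ?_⟩
      rw [hFixd, Finset.mem_filter]
      rintro ⟨-, hfx⟩
      exact hnf (hcancel _ _ hfx)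
    set orb : ZMod (q ^ 2 + q + 1) → Set (ZMod (q ^ 2 + q + 1)) :=
      fun s => {s, u * s, u ^ 2 * s} with horb
    have husq : ∀ s : ZMod (q ^ 2 + q + 1), u ^ 2 * s = u * (u * s) := by
      intro s
      ring
    have hu3s : ∀ s : ZMod (q ^ 2 + q + 1), u * (u ^ 2 * s) = s := by
      intro s
      have h : u * (u ^ 2 * s) = u ^ 3 * s := by ring
      rw [h, hu3, one_mul]
    have horbu : ∀ s, orb (u * s) = orb s := by
      intro s
      rw [horb]
      simp only
      have h1 : u ^ 2 * (u * s) = s := by rw [husq (u * s), ← husq s, hu3s s]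
      ext x
      simp only [Set.mem_insert_iff, Set.mem_singleton_iff]
      constructor
      · rintro (h | h | h)
        · exact Or.inr (Or.inl h)
        · right; right; rw [h, husq]
        · left; rw [h, h1]
      · rintro (h | h | h)
        · right; right; rw [h]; exact h1.symm
        · left; exact h
        · right; left; rw [h, husq]
    have hne3 : ∀ s ∈ Mov, s ≠ u * s ∧ u * s ≠ u ^ 2 * s ∧ s ≠ u ^ 2 * s := by
      intro s hs
      obtain ⟨hsf, hnf⟩ := hMovSf s hs
      refine ⟨fun h => hnf h.symm, ?_, ?_⟩
      · intro h
        rw [husq] at h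
        exact hnf (hcancel _ _ h).symm
      · intro h
        have h2 := congrArg (fun x => u * x) h
        rw [hu3s] at h2
        exact hnf h2
    have hfiber : ∀ s₀ ∈ Mov,
        Mov.filter (fun s => orb s = orb s₀) = {s₀, u * s₀, u ^ 2 * s₀} := by
      intro s₀ hs₀
      ext s
      rw [Finset.mem_filter, Finset.mem_insert, Finset.mem_insert, Finset.mem_singleton]
      constructor
      · rintro ⟨hsm, horbeq⟩
        have hself : s ∈ orb s₀ := by
          rw [← horbeq, horb]
          exact Set.mem_insert _ _
        rw [horb] at hself
        simpa using hself
      · rintro (rfl | rfl | rfl)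
        · exact ⟨hs₀, rfl⟩
        · exact ⟨hMovu _ hs₀, horbu s₀⟩
        · refine ⟨?_, ?_⟩
          · rw [husq]
            exact hMovu _ (hMovu _ hs₀)
          · rw [husq, horbu, horbu]
    have hfibcard : ∀ s₀ ∈ Mov, (Mov.filter (fun s => orb s = orb s₀)).card = 3 := by
      intro s₀ hs₀
      obtain ⟨h1, h2, h3⟩ := hne3 s₀ hs₀
      rw [hfiber s₀ hs₀, Finset.card_insert_of_notMem (by simp [h1, h3]),
        Finset.card_insert_of_notMem (by simp [h2]), Finset.card_singleton]
    have hcount : Mov.card = 3 * (Mov.image orb).card := by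
      rw [Finset.card_eq_sum_card_fiberwise
        (fun s hs => Finset.mem_image_of_mem orb hs)]
      have hconst : ∀ O ∈ Mov.image orb, (Mov.filter (fun s => orb s = O)).card = 3 := by
        intro O hO
        obtain ⟨s₀, hs₀, rfl⟩ := Finset.mem_image.mp hO
        exact hfibcard s₀ hs₀
      rw [Finset.sum_congr rfl hconst, Finset.sum_const, smul_eq_mul, mul_comm]
    have hOset : {O : Set (ZMod (q ^ 2 + q + 1)) |
        (∃ s : ZMod (q ^ 2 + q + 1), Algebra.trace K L ((α : L) ^ s.val) = 0 ∧
          O = {s, u * s, u ^ 2 * s}) ∧ O.ncard = 3} = ↑(Mov.image orb) := by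
      ext O
      simp only [Set.mem_setOf_eq, Finset.coe_image, Set.mem_image, Finset.mem_coe]
      constructor
      · rintro ⟨⟨s, htr, rfl⟩, hn3⟩
        have hsf : s ∈ Sf := by
          rw [hSfd, Finset.mem_filter]
          exact ⟨Finset.mem_univ _, htr⟩
        have hsm : s ∈ Mov := by
          rw [hMovd, Finset.mem_sdiff]
          refine ⟨hsf, fun hfx => ?_⟩
          rw [hFixd, Finset.mem_filter] at hfx
          have hueq : u * s = s := hfx.2
          have hOone : ({s, u * s, u ^ 2 * s} : Set (ZMod (q ^ 2 + q + 1))) = {s} := by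
            rw [husq, hueq, hueq]
            simp
          rw [hOone, Set.ncard_singleton] at hn3
          omega
        exact ⟨s, hsm, by rw [horb]⟩
      · rintro ⟨s, hs, rfl⟩
        obtain ⟨h1, h2, h3⟩ := hne3 s hs
        refine ⟨⟨s, (Finset.mem_filter.mp (hMovSf s hs).1).2, by rw [horb]⟩, ?_⟩
        rw [horb]
        exact Set.ncard_eq_three.mpr ⟨s, u * s, u ^ 2 * s, h1, h3, h2, rfl⟩
    rw [hOset, Set.ncard_coe_finset]
    have hFixmem : ∀ s : ZMod (q ^ 2 + q + 1), s ∈ Fix ↔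
        (Algebra.trace K L ((α : L) ^ s.val) = 0 ∧ q * s.val ≡ s.val [MOD q ^ 2 + q + 1]) := by
      intro s
      rw [hFixd, Finset.mem_filter, hSfd, Finset.mem_filter, hfixiff s]
      simp only [Finset.mem_univ, true_and]
    have hFixcard : Fix.card = (if q % 3 = 1 then 2 else if q % 3 = 0 then 1 else 0) := by
      by_cases h1 : q % 3 = 1
      · rw [if_pos h1]
        obtain ⟨t, ht⟩ : ∃ t, q = 3 * t + 1 := ⟨q / 3, by omega⟩
        have hdvd3 : q ^ 2 + q + 1 = 3 * (3 * t * t + 3 * t + 1) := by rw [ht]; ring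
        have hm3 : 3 * ((q ^ 2 + q + 1) / 3) = q ^ 2 + q + 1 := Nat.mul_div_cancel' ⟨_, hdvd3⟩
        set m := (q ^ 2 + q + 1) / 3 with hmd
        have hm1 : 1 ≤ m := by omega
        have hFixeq : Fix = {((m : ℕ) : ZMod (q ^ 2 + q + 1)),
            ((2 * m : ℕ) : ZMod (q ^ 2 + q + 1))} := by
          ext s
          rw [hFixmem, Finset.mem_insert, Finset.mem_singleton]
          constructor
          · rintro ⟨htr, hmod⟩
            have hs' : ((s.val : ℕ) : ZMod (q ^ 2 + q + 1)) = s := ZMod.natCast_rightInverse s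
            rcases classify_fixed hq2 (ZMod.val_lt s) hmod with hv0 | ⟨-, hcase⟩
            · exfalso
              rw [hv0] at htr
              exact absurd ((trace_one_zero_iff hq2 hK hL α hα).mp htr) (by omega)
            · rcases hcase with hm | hm
              · left; rw [hmd, ← hm]; exact hs'.symm
              · right; rw [hmd, ← hm]; exact hs'.symm
          · rintro (rfl | rfl)
            · rw [ZMod.val_natCast, Nat.mod_eq_of_lt (by omega)]
              constructor
              · have := trace_m_zero hq2 hK hL α hα h1 1 (Or.inl rfl)
                rwa [one_mul] at this
              · have := fixed_mem hq2 h1 1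
                rwa [one_mul] at this
            · rw [ZMod.val_natCast, Nat.mod_eq_of_lt (by omega)]
              exact ⟨trace_m_zero hq2 hK hL α hα h1 2 (Or.inr rfl), fixed_mem hq2 h1 2⟩
        rw [hFixeq, Finset.card_insert_of_notMem, Finset.card_singleton]
        rw [Finset.mem_singleton]
        intro hcast
        have hmm := (ZMod.natCast_eq_natCast_iff _ _ _).mp hcast
        have h2 : m % (q ^ 2 + q + 1) = (2 * m) % (q ^ 2 + q + 1) := hmm
        rw [Nat.mod_eq_of_lt (by omega), Nat.mod_eq_of_lt (by omega)] at h2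
        omega
      · rw [if_neg h1]
        by_cases h0 : q % 3 = 0
        · rw [if_pos h0]
          have hFixeq : Fix = {(0 : ZMod (q ^ 2 + q + 1))} := by
            ext s
            rw [hFixmem, Finset.mem_singleton]
            constructor
            · rintro ⟨htr, hmod⟩
              rcases classify_fixed hq2 (ZMod.val_lt s) hmod with hv0 | ⟨hq1, -⟩
              · have hs' : ((s.val : ℕ) : ZMod (q ^ 2 + q + 1)) = s :=
                  ZMod.natCast_rightInverse s
                rw [← hs', hv0, Nat.cast_zero]
              · omega
            · rintro rfl
              rw [ZMod.val_zero]
              exact ⟨(trace_one_zero_iff hq2 hK hL α hα).mpr h0, by rw [mul_zero]⟩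
          rw [hFixeq, Finset.card_singleton]
        · rw [if_neg h0, Finset.card_eq_zero, Finset.eq_empty_iff_forall_notMem]
          intro s hs
          rw [hFixmem] at hs
          obtain ⟨htr, hmod⟩ := hs
          rcases classify_fixed hq2 (ZMod.val_lt s) hmod with hv0 | ⟨hq1, -⟩
          · rw [hv0] at htr
            exact h0 ((trace_one_zero_iff hq2 hK hL α hα).mp htr)
          · exact h1 hq1
    have hsub : Fix ⊆ Sf := Finset.filter_subset _ _
    have hFixle := Finset.card_le_card hsub
    have hMovcard : Mov.card = Sf.card - Fix.card := Finset.card_sdiff_of_subset hsub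
    rw [Rq]
    by_cases h1 : q % 3 = 1
    · rw [if_pos h1] at hFixcard ⊢
      omega
    · rw [if_neg h1] at hFixcard ⊢
      by_cases h0 : q % 3 = 0
      · rw [if_pos h0] at hFixcard ⊢
        omega
      · rw [if_neg h0] at hFixcard ⊢
        omega
end

section
/- Let q be a prime power, K a finite field with q elements, L a field extension of K with q³ elements, Tr = Tr_{L/K} the field trace, and α a generator of the cyclic group of units L×. Let G = ℤ/(q²+q+1)ℤ and S = {l ∈ G : Tr(α^l) = 0}. Then the number of distinct triangle presentations compatible with F(G,S) is at least 2^{R(q)}, where R(q) = (q−1)/3 if q ≡ 1 (mod 3), R(q) = q/3 if q ≡ 0 (mod 3), and R(q) = (q+1)/3 if q ≡ 2 (mod 3). -/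
/-- `F(G,S) = {(x, x+s) : x ∈ G, s ∈ S}` for an additive group `G`. -/
def FGSAdd {G : Type*} [AddGroup G] (S : Set G) : Set (G × G) :=
  {p | ∃ x : G, ∃ s ∈ S, p = (x, x + s)}

/-- `T ⊆ G³` is a triangle presentation compatible with `F ⊆ G × G`
(additive notation). -/
def IsTrianglePresentationAdd {G : Type*} [AddGroup G] (F : Set (G × G))
    (T : Set (G × G × G)) : Prop :=
  (∀ x y z : G, (x, y, z) ∈ T → (x, y) ∈ F) ∧
  (∀ x y : G, (x, y) ∈ F → ∃! z : G, (x, y, z) ∈ T) ∧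
  (∀ x y z : G, (x, y, z) ∈ T → (y, z, x) ∈ T)

/-- The triangle presentation associated to `σ`. -/
def TPres {G : Type*} [AddGroup G] (S : Set G) (σ : G → G) : Set (G × G × G) :=
  {p | ∃ x : G, ∃ s ∈ S, p = (x, x + s, x + s + σ s)}

lemma mem_TPres_iff {G : Type*} [AddCommGroup G] (S : Set G) (σ : G → G) (x y z : G) :
    (x, y, z) ∈ TPres S σ ↔ ∃ s ∈ S, y = x + s ∧ z = x + s + σ s := by
  constructor
  · rintro ⟨x', s, hs, h⟩
    obtain ⟨rfl, rfl, rfl⟩ : x = x' ∧ y = x' + s ∧ z = x' + s + σ s := by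
      simpa [Prod.ext_iff] using h
    exact ⟨s, hs, rfl, rfl⟩
  · rintro ⟨s, hs, rfl, rfl⟩
    exact ⟨x, s, hs, rfl⟩

lemma TPres_isPresentation {G : Type*} [AddCommGroup G] (S : Set G) (σ : G → G)
    (h1 : ∀ s ∈ S, σ s ∈ S) (h2 : ∀ s ∈ S, s + σ s + σ (σ s) = 0) :
    IsTrianglePresentationAdd (FGSAdd S) (TPres S σ) := by
  refine ⟨?_, ?_, ?_⟩
  · rintro x y z h
    obtain ⟨s, hs, rfl, -⟩ := (mem_TPres_iff S σ x y z).mp h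
    exact ⟨x, s, hs, rfl⟩
  · rintro x y ⟨x', s, hs, h⟩
    obtain ⟨rfl, rfl⟩ : x = x' ∧ y = x' + s := by simpa [Prod.ext_iff] using h
    refine ⟨x + s + σ s, ⟨x, s, hs, rfl⟩, ?_⟩
    rintro z hz
    obtain ⟨s', hs', he, rfl⟩ := (mem_TPres_iff S σ _ _ _).mp hz
    obtain rfl : s = s' := by rwa [add_right_inj] at he
    rfl
  · rintro x y z h
    obtain ⟨s, hs, rfl, rfl⟩ := (mem_TPres_iff S σ x y z).mp h
    rw [mem_TPres_iff]
    refine ⟨σ s, h1 s hs, rfl, ?_⟩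
    have h0 := h2 s hs
    have : x + s + σ s + σ (σ s) = x := by
      rw [add_assoc, add_assoc, ← add_assoc s, h0, add_zero]
    rw [this]

lemma TPres_inj {G : Type*} [AddCommGroup G] (S : Set G) (σ σ' : G → G) (s : G) (hs : s ∈ S)
    (h : TPres S σ = TPres S σ') : σ s = σ' s := by
  have h1 : ((0 : G), (0:G) + s, (0:G) + s + σ s) ∈ TPres S σ := ⟨0, s, hs, rfl⟩
  rw [h, mem_TPres_iff] at h1
  obtain ⟨s', hs', he, hz⟩ := h1
  obtain rfl : s = s' := by rwa [add_right_inj] at he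
  rwa [add_right_inj] at hz

lemma exists_invariant_family {α : Type*} [DecidableEq α] (μ : α → α)
    (hμ3 : ∀ a, μ (μ (μ a)) = a) :
    ∀ (k : ℕ) (A : Finset α), (∀ a ∈ A, μ a ∈ A) → (∀ a ∈ A, μ a ≠ a) → 3 * k ≤ A.card →
    ∃ f : Finset (Finset α), f.card = 2 ^ k ∧
      ∀ E ∈ f, E ⊆ A ∧ ∀ a, a ∈ E ↔ μ a ∈ E := by
  intro k
  induction k with
  | zero =>
    intro A _ _ _
    exact ⟨{∅}, by simp, by simp⟩
  | succ k ih =>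
    intro A hinv hnf hcard
    have hpos : 0 < A.card := lt_of_lt_of_le (by positivity) hcard
    obtain ⟨a, ha⟩ := Finset.card_pos.mp hpos
    have hμa : μ a ∈ A := hinv a ha
    have hμμa : μ (μ a) ∈ A := hinv _ hμa
    have d1 : μ a ≠ a := hnf a ha
    have d2 : μ (μ a) ≠ μ a := hnf _ hμa
    have d3 : μ (μ a) ≠ a := by
      intro h
      have h2 := congrArg μ h
      rw [hμ3] at h2
      exact d1 h2.symm
    set O : Finset α := {a, μ a, μ (μ a)} with hO
    have hOmem : ∀ x, x ∈ O ↔ x = a ∨ x = μ a ∨ x = μ (μ a) := by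
      intro x; simp [hO]
    have hOsub : O ⊆ A := by
      intro x hx
      rcases (hOmem x).mp hx with rfl | rfl | rfl <;> assumption
    have hOcard : O.card = 3 := by
      rw [hO]
      rw [Finset.card_insert_of_notMem (by simp [d1.symm, d3.symm]),
        Finset.card_insert_of_notMem (by simp [d2.symm]), Finset.card_singleton]
    have hOinv : ∀ x, x ∈ O → μ x ∈ O := by
      intro x hx
      rcases (hOmem x).mp hx with rfl | rfl | rfl
      · exact (hOmem _).mpr (Or.inr (Or.inl rfl))
      · exact (hOmem _).mpr (Or.inr (Or.inr rfl))
      · exact (hOmem _).mpr (Or.inl (hμ3 a))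
    have hOinv' : ∀ x, μ x ∈ O → x ∈ O := by
      intro x hx
      have : x = μ (μ (μ x)) := (hμ3 x).symm
      rw [this]
      exact hOinv _ (hOinv _ hx)
    set A' := A \ O with hA'
    have hA'inv : ∀ x ∈ A', μ x ∈ A' := by
      intro x hx
      rw [hA', Finset.mem_sdiff] at hx ⊢
      refine ⟨hinv x hx.1, fun h => hx.2 ?_⟩
      exact hOinv' x h
    have hA'nf : ∀ x ∈ A', μ x ≠ x := fun x hx => hnf x (Finset.mem_sdiff.mp hx).1
    have hA'card : 3 * k ≤ A'.card := by
      rw [hA', Finset.card_sdiff_of_subset hOsub, hOcard]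
      omega
    obtain ⟨f', hf'card, hf'⟩ := ih A' hA'inv hA'nf hA'card
    have haO : a ∈ O := (hOmem a).mpr (Or.inl rfl)
    have hnotin : ∀ E ∈ f', a ∉ E := by
      intro E hE h
      have := (hf' E hE).1 h
      rw [hA', Finset.mem_sdiff] at this
      exact this.2 haO
    refine ⟨f' ∪ f'.image (· ∪ O), ?_, ?_⟩
    · rw [Finset.card_union_of_disjoint, Finset.card_image_of_injOn, hf'card]
      · ring
      · intro E hE E' hE' h
        dsimp only at h
        have : E = (E ∪ O) \ O := by
          rw [Finset.union_sdiff_right]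
          refine (Finset.sdiff_eq_self_of_disjoint ?_).symm
          exact Finset.disjoint_left.mpr fun x hx hxO =>
            (Finset.mem_sdiff.mp ((hf' E hE).1 hx)).2 hxO
        rw [this, h, Finset.union_sdiff_right]
        refine Finset.sdiff_eq_self_of_disjoint ?_
        exact Finset.disjoint_left.mpr fun x hx hxO =>
          (Finset.mem_sdiff.mp ((hf' E' hE').1 hx)).2 hxO
      · rw [Finset.disjoint_left]
        intro E hE hE2
        obtain ⟨C, hC, rfl⟩ := Finset.mem_image.mp hE2
        exact hnotin _ hE (Finset.mem_union_right C haO)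
    · intro E hE
      rcases Finset.mem_union.mp hE with hE | hE
      · exact ⟨(hf' E hE).1.trans (Finset.sdiff_subset), (hf' E hE).2⟩
      · obtain ⟨C, hC, rfl⟩ := Finset.mem_image.mp hE
        obtain ⟨hCsub, hCinv⟩ := hf' C hC
        constructor
        · exact Finset.union_subset (hCsub.trans Finset.sdiff_subset) hOsub
        · intro x
          simp only [Finset.mem_union]
          constructor
          · rintro (h | h)
            · exact Or.inl ((hCinv x).mp h)
            · exact Or.inr (hOinv x h)
          · rintro (h | h)
            · exact Or.inl ((hCinv x).mpr h)
            · exact Or.inr (hOinv' x h)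


open Polynomial in
/-- An element of `L` fixed by `x ↦ x^q` lies in the image of `K`, `|K| = q`. -/
lemma mem_range_of_pow_card {q : ℕ} (hq2 : 2 ≤ q) (K L : Type*) [Field K] [Field L]
    [Algebra K L] [Fintype K] [Fintype L] (hK : Fintype.card K = q)
    (x : L) (hx : x ^ q = x) : ∃ c : K, algebraMap K L c = x := by
  classical
  set I : Finset L := Finset.univ.image (algebraMap K L) with hI
  have hIcard : I.card = q := by
    rw [hI, Finset.card_image_of_injective _ (algebraMap K L).injective,
      Finset.card_univ, hK]
  by_contra hc
  push_neg at hc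
  have hxI : x ∉ I := by
    intro h
    obtain ⟨c, -, hce⟩ := Finset.mem_image.mp h
    exact hc c hce
  set f : L[X] := X ^ q - C 1 * X ^ 1 with hf
  have hfd : f.natDegree = q := by
    rw [hf, Polynomial.natDegree_sub_eq_left_of_natDegree_lt (by
      simp only [Polynomial.natDegree_X_pow]
      calc (C (1:L) * X ^ 1).natDegree ≤ 1 := by
            simpa using Polynomial.natDegree_mul_le (p := C (1:L)) (q := X ^ 1)
        _ < q := by omega),
      Polynomial.natDegree_X_pow]
  have hf0 : f ≠ 0 := fun h => by simp [h] at hfd; omega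
  have hroot : ∀ y ∈ insert x I, y ∈ f.roots.toFinset := by
    intro y hy
    rw [Multiset.mem_toFinset, Polynomial.mem_roots hf0]
    rcases Finset.mem_insert.mp hy with rfl | hyI
    · simp [hf, Polynomial.IsRoot, hx]
    · obtain ⟨c, -, rfl⟩ := Finset.mem_image.mp hyI
      have : (algebraMap K L c) ^ q = algebraMap K L c := by
        rw [← map_pow]
        congr 1
        rw [← hK]
        exact FiniteField.pow_card c
      simp [hf, Polynomial.IsRoot, this]
  have hle : (insert x I).card ≤ f.roots.toFinset.card :=
    Finset.card_le_card fun y hy => hroot y hy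
  rw [Finset.card_insert_of_notMem hxI, hIcard] at hle
  have := (Multiset.toFinset_card_le f.roots).trans (Polynomial.card_roots' f)
  omega


lemma trace_pow_card_eq {q : ℕ} (K L : Type*) [Field K] [Field L]
    [Algebra K L] [Fintype K] [Fintype L] (hK : Fintype.card K = q) (x : L) :
    Algebra.trace K L (x ^ q) = Algebra.trace K L x := by
  classical
  set p := ringChar K with hpdef
  have hp : p.Prime := CharP.char_is_prime K p
  haveI : Fact p.Prime := ⟨hp⟩
  obtain ⟨k, -, hcard⟩ := FiniteField.card K p
  haveI : CharP L p := charP_of_injective_algebraMap (algebraMap K L).injective p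
  haveI : ExpChar L p := ExpChar.prime hp
  set φ : L →ₐ[K] L :=
    { toRingHom := iterateFrobenius L p k
      commutes' := fun c => by
        show iterateFrobenius L p k (algebraMap K L c) = algebraMap K L c
        rw [iterateFrobenius_def, ← map_pow]
        congr 1
        rw [← hcard]
        exact FiniteField.pow_card c } with hφ
  have hbij : Function.Bijective φ :=
    (Finite.injective_iff_bijective).mp (RingHom.injective (φ : L →+* L))
  have := Algebra.trace_eq_of_algEquiv (AlgEquiv.ofBijective φ hbij) x
  have hφx : (AlgEquiv.ofBijective φ hbij) x = x ^ q := by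
    show iterateFrobenius L p k x = x ^ q
    rw [iterateFrobenius_def]
    congr 1
    rw [← hK, hcard]
  rw [hφx] at this
  exact this

lemma trace_mul_algebraMap_eq_zero_iff (K L : Type*) [Field K] [Field L]
    [Algebra K L] (c : K) (hc : c ≠ 0) (y : L) :
    Algebra.trace K L (algebraMap K L c * y) = 0 ↔ Algebra.trace K L y = 0 := by
  rw [← Algebra.smul_def, map_smul, smul_eq_mul, mul_eq_zero]
  tauto

section Count

variable {q : ℕ} (hq2 : 2 ≤ q) (K L : Type*) [Field K] [Field L]
    [Algebra K L] [Fintype K] [Fintype L]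
    (hK : Fintype.card K = q) (hL : Fintype.card L = q ^ 3)
    (α : Lˣ) (hα : ∀ u : Lˣ, u ∈ Subgroup.zpowers α)

include hq2 hK hL hα

lemma exists_algebraMap_eq_pow (d : ℕ) (hd : (q^2+q+1) ∣ d) :
    ∃ c : K, c ≠ 0 ∧ algebraMap K L c = (α : L) ^ d := by
  classical
  obtain ⟨t, rfl⟩ := hd
  have hmul : (q^2+q+1) * (q-1) = q^3 - 1 := by
    obtain ⟨m, rfl⟩ : ∃ m, q = m + 2 := ⟨q - 2, by omega⟩
    have e1 : (m+2)^3 = ((m+2)^2 + (m+2) + 1) * ((m+2)-1) + 1 := by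
      rw [show (m+2)-1 = m+1 from rfl]; ring
    omega
  have hcardu : Fintype.card Lˣ = q^3 - 1 := by rw [Fintype.card_units, hL]
  have hord : α ^ ((q^2+q+1) * t * (q-1)) = 1 := by
    have : α ^ (Fintype.card Lˣ) = 1 := pow_card_eq_one
    rw [hcardu] at this
    rw [show (q^2+q+1) * t * (q-1) = (q^3-1) * t by rw [← hmul]; ring, pow_mul, this, one_pow]
  have hx1 : ((α : L) ^ ((q^2+q+1) * t)) ^ (q - 1) = 1 := by
    rw [← pow_mul]
    have := congrArg (Units.val) hord
    simpa using this
  have hxq : ((α : L) ^ ((q^2+q+1) * t)) ^ q = (α : L) ^ ((q^2+q+1) * t) := by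
    set y : L := (α : L) ^ ((q^2+q+1) * t) with hy
    clear_value y
    rw [show q = (q - 1) + 1 by omega, pow_succ, hx1, one_mul]
  obtain ⟨c, hc⟩ := mem_range_of_pow_card hq2 K L hK _ hxq
  refine ⟨c, fun h => ?_, hc⟩
  rw [h, map_zero] at hc
  exact (pow_ne_zero _ (Units.ne_zero α)) hc.symm

lemma trace_pow_congr (a b : ℕ) (h : a ≡ b [MOD q^2+q+1]) :
    (Algebra.trace K L ((α : L) ^ a) = 0 ↔ Algebra.trace K L ((α : L) ^ b) = 0) := by
  have key : ∀ a b : ℕ, a ≤ b → a ≡ b [MOD q^2+q+1] →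
      (Algebra.trace K L ((α : L) ^ b) = 0 ↔ Algebra.trace K L ((α : L) ^ a) = 0) := by
    intro a b hab h
    have hdvd : (q^2+q+1) ∣ b - a := (Nat.modEq_iff_dvd' hab).mp h
    obtain ⟨c, hc0, hc⟩ := exists_algebraMap_eq_pow hq2 K L hK hL α hα (b - a) hdvd
    have hb : (α : L) ^ b = algebraMap K L c * (α : L) ^ a := by
      rw [hc, ← pow_add]
      congr 1
      omega
    rw [hb, trace_mul_algebraMap_eq_zero_iff K L c hc0]
  rcases le_total a b with hab | hab
  · exact (key a b hab h).symm
  · exact key b a hab h.symm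


lemma card_S [NeZero (q^2+q+1)]
    [inst : DecidablePred (fun l : ZMod (q^2+q+1) => Algebra.trace K L ((α : L) ^ l.val) = 0)] :
    (Finset.univ.filter (fun l : ZMod (q^2+q+1) =>
      Algebra.trace K L ((α : L) ^ l.val) = 0)).card * (q - 1) = q ^ 2 - 1 := by
  classical
  set Sf := Finset.univ.filter (fun l : ZMod (q^2+q+1) =>
      Algebra.trace K L ((α : L) ^ l.val) = 0) with hSf
  haveI : FiniteDimensional K L := Module.Finite.of_finite
  haveI : Algebra.IsAlgebraic K L := Algebra.IsAlgebraic.of_finite K L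
  haveI : Algebra.IsSeparable K L := inferInstance
  have hrank : Module.finrank K L = 3 := by
    have h := Module.card_eq_pow_finrank (K := K) (V := L)
    rw [hK, hL] at h
    exact (Nat.pow_right_injective hq2 h.symm)
  haveI : Fintype ↥(LinearMap.ker (Algebra.trace K L)) := Fintype.ofFinite _
  have hker : Fintype.card ↥(LinearMap.ker (Algebra.trace K L)) = q ^ 2 := by
    have h1 := LinearMap.finrank_range_add_finrank_ker (Algebra.trace K L)
    rw [hrank] at h1
    have h2 : LinearMap.range (Algebra.trace K L) = ⊤ := LinearMap.range_eq_top.mpr (Algebra.trace_surjective K L)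
    rw [h2, finrank_top, Module.finrank_self] at h1
    have h3 : Module.finrank K ↥(LinearMap.ker (Algebra.trace K L)) = 2 := by omega
    have h4 := Module.card_eq_pow_finrank (K := K) (V := ↥(LinearMap.ker (Algebra.trace K L)))
    rw [h3, hK] at h4
    exact h4
  have hTf : (Finset.univ.filter fun x : L => (Algebra.trace K L) x = 0).card = q ^ 2 := by
    rw [← Fintype.card_subtype, ← hker]
    exact Fintype.card_congr (Equiv.subtypeEquivRight fun x => Iff.symm LinearMap.mem_ker)
  have hUf : (Finset.univ.filter fun u : Lˣ => (Algebra.trace K L) (u : L) = 0).card = q ^ 2 - 1 := by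
    have h0 : (0 : L) ∈ Finset.univ.filter (fun x : L => (Algebra.trace K L) x = 0) := by
      simp
    have hcb : (Finset.univ.filter fun u : Lˣ => (Algebra.trace K L) (u : L) = 0).card
        = ((Finset.univ.filter fun x : L => (Algebra.trace K L) x = 0).erase 0).card := by
      refine Finset.card_bij (fun u _ => (u : L)) ?_ ?_ ?_
      · intro u hu
        rw [Finset.mem_erase]
        exact ⟨Units.ne_zero u, by simpa using (Finset.mem_filter.mp hu).2⟩
      · intro u _ v _ h
        exact Units.ext h
      · intro x hx
        rw [Finset.mem_erase, Finset.mem_filter] at hx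
        exact ⟨Units.mk0 x hx.1, by simp [hx.2.2], rfl⟩
    rw [hcb, Finset.card_erase_of_mem h0, hTf]
  have hmul : (q^2+q+1) * (q-1) = q^3 - 1 := by
    obtain ⟨m, hm⟩ : ∃ m, q = m + 2 := ⟨q - 2, by omega⟩
    subst hm
    have e1 : (m+2)^3 = ((m+2)^2 + (m+2) + 1) * ((m+2)-1) + 1 := by
      rw [show (m+2)-1 = m+1 from rfl]; ring
    omega
  have hcardu : Fintype.card Lˣ = q^3 - 1 := by rw [Fintype.card_units, hL]
  have hord : orderOf α = q^3 - 1 := by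
    rw [orderOf_eq_card_of_forall_mem_zpowers hα, Nat.card_eq_fintype_card, hcardu]
  set φ : Kˣ →* Lˣ := Units.map (algebraMap K L : K →+* L).toMonoidHom with hφ
  have hφcoe : ∀ c : Kˣ, ((φ c : Lˣ) : L) = algebraMap K L (c : K) := fun c => rfl
  have hβ : ∀ c : Kˣ, (φ c) ^ (q - 1) = 1 := by
    intro c
    apply Units.ext
    push_cast [hφcoe]
    rw [← map_pow]
    have : (c : K) ^ (q - 1) = 1 := by
      rw [← hK]
      exact FiniteField.pow_card_sub_one_eq_one _ (Units.ne_zero c)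
    rw [this, map_one]
  have hφinj : Function.Injective φ := by
    intro c c' h
    apply Units.ext
    apply (algebraMap K L).injective
    rw [← hφcoe, ← hφcoe, h]
  have key : ((Finset.univ : Finset Kˣ) ×ˢ Sf).card
      = (Finset.univ.filter fun u : Lˣ => (Algebra.trace K L) (u : L) = 0).card := by
    refine Finset.card_bij (fun p _ => φ p.1 * α ^ (p.2.val)) ?_ ?_ ?_
    · rintro ⟨c, s⟩ hp
      simp only [Finset.mem_filter, Finset.mem_univ, true_and]
      have hs : (Algebra.trace K L) ((α : L) ^ s.val) = 0 :=
        (Finset.mem_filter.mp (Finset.mem_product.mp hp).2).2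
      have hco : ((φ c * α ^ s.val : Lˣ) : L) = algebraMap K L (c : K) * (α : L) ^ s.val := by
        push_cast [hφcoe]; ring
      rw [hco, trace_mul_algebraMap_eq_zero_iff K L _ (Units.ne_zero c)]
      exact hs
    · rintro ⟨c, s⟩ hp ⟨c', s'⟩ hp' h
      dsimp only at h
      have hpow : α ^ (s.val * (q-1)) = α ^ (s'.val * (q-1)) := by
        have h2 := congrArg (· ^ (q-1)) h
        rw [mul_pow, mul_pow, hβ c, hβ c', one_mul, one_mul, ← pow_mul, ← pow_mul] at h2
        exact h2
      have hmod : s.val * (q-1) ≡ s'.val * (q-1) [MOD (q^3-1)] := by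
        rw [← hord]
        exact pow_eq_pow_iff_modEq.mp hpow
      rw [← hmul] at hmod
      have hmod2 : s.val ≡ s'.val [MOD q^2+q+1] :=
        Nat.ModEq.mul_right_cancel' (by omega) hmod
      have hss : s = s' := by
        have hlt := ZMod.val_lt s
        have hlt' := ZMod.val_lt s'
        rw [Nat.ModEq, Nat.mod_eq_of_lt hlt, Nat.mod_eq_of_lt hlt'] at hmod2
        exact ZMod.val_injective _ hmod2
      subst hss
      have hcc : φ c = φ c' := by
        have := mul_right_cancel h
        exact this
      rw [hφinj hcc]
    · intro u hu
      obtain ⟨m, hm⟩ : ∃ m : ℕ, α ^ m = u :=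
        (Submonoid.mem_powers_iff u α).mp (mem_powers_iff_mem_zpowers.mpr (hα u))
      set s : ZMod (q^2+q+1) := (m : ZMod (q^2+q+1)) with hsdef
      have hsval : s.val = m % (q^2+q+1) := ZMod.val_natCast _ m
      have hsmem : s ∈ Sf := by
        rw [hSf, Finset.mem_filter]
        refine ⟨Finset.mem_univ _, ?_⟩
        rw [trace_pow_congr hq2 K L hK hL α hα s.val m (by rw [hsval]; exact Nat.mod_modEq m _)]
        have : ((α : L) ^ m) = (u : L) := by rw [← hm]; push_cast; rfl
        rw [this]
        exact (Finset.mem_filter.mp hu).2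
      have hdvd : (q^2+q+1) ∣ m - s.val := by
        rw [hsval]
        exact (Nat.modEq_iff_dvd' (Nat.mod_le m _)).mp (Nat.mod_modEq m _)
      obtain ⟨cv, hc0, hc⟩ := exists_algebraMap_eq_pow hq2 K L hK hL α hα (m - s.val) hdvd
      refine ⟨⟨Units.mk0 cv hc0, s⟩, Finset.mem_product.mpr ⟨Finset.mem_univ _, hsmem⟩, ?_⟩
      apply Units.ext
      have hle : s.val ≤ m := by rw [hsval]; exact Nat.mod_le m _
      push_cast [hφcoe]
      show algebraMap K L cv * (α : L) ^ s.val = (u : L)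
      rw [hc, ← pow_add, show m - s.val + s.val = m by omega, ← hm]
      push_cast
      rfl
  rw [Finset.card_product, Finset.card_univ, Fintype.card_units, hK, mul_comm] at key
  rw [key, hUf]

end Count


/-- If `q*s = s` in `ZMod (q²+q+1)` then `q²+q+1 ∣ (q-1) * s.val`. -/
lemma fixed_dvd {q : ℕ} (hq2 : 2 ≤ q) [NeZero (q^2+q+1)] (s : ZMod (q^2+q+1))
    (h : (q : ZMod (q^2+q+1)) * s = s) : (q^2+q+1) ∣ (q - 1) * s.val := by
  rw [← ZMod.natCast_eq_zero_iff]
  push_cast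
  rw [Nat.cast_sub (by omega : 1 ≤ q), ZMod.natCast_val, ZMod.cast_id]
  push_cast
  rw [sub_mul, one_mul, h, sub_self]

lemma gcd_q_sub_one (q : ℕ) (hq2 : 2 ≤ q) : Nat.gcd (q - 1) (q^2+q+1) = Nat.gcd (q - 1) 3 := by
  have h : q^2+q+1 = 3 + (q+2) * (q-1) := by
    obtain ⟨m, rfl⟩ : ∃ m, q = m + 2 := ⟨q - 2, by omega⟩
    have : (m+2+2) * (m+2-1) = (m+4)*(m+1) := by congr 1 <;> omega
    have e : (m+4)*(m+1) = m^2 + 5*m + 4 := by ring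
    have e2 : (m+2)^2 = m^2 + 4*m + 4 := by ring
    omega
  rw [h, Nat.gcd_add_mul_right_right]

lemma fixed_val_eq_zero {q : ℕ} (hq2 : 2 ≤ q) (h3 : ¬ (3 ∣ q - 1)) {v : ℕ}
    (hv : v < q^2+q+1) (hdvd : (q^2+q+1) ∣ (q-1) * v) : v = 0 := by
  have h1 : Nat.Coprime 3 (q - 1) := (Nat.prime_three.coprime_iff_not_dvd).mpr h3
  have hco : Nat.Coprime (q - 1) (q^2+q+1) := by
    unfold Nat.Coprime
    rw [gcd_q_sub_one q hq2]
    exact Nat.coprime_comm.mp h1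
  have hdv : (q^2+q+1) ∣ v := (Nat.Coprime.symm hco).dvd_of_dvd_mul_left hdvd
  obtain ⟨w, rfl⟩ := hdv
  rcases Nat.eq_zero_or_pos w with rfl | hw
  · simp
  · exfalso
    have : (q^2+q+1) * 1 ≤ (q^2+q+1) * w := Nat.mul_le_mul_left _ hw
    omega

lemma fixed_val_cases {q : ℕ} (hq2 : 2 ≤ q) (h3 : q % 3 = 1) {v : ℕ}
    (hv : v < q^2+q+1) (hdvd : (q^2+q+1) ∣ (q-1) * v) :
    v = 0 ∨ v = (q^2+q+1)/3 ∨ v = 2*((q^2+q+1)/3) := by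
  obtain ⟨a, rfl⟩ : ∃ a, q = 3*a + 1 := ⟨q / 3, by omega⟩
  have e2 : (3*a+1)^2 = 9*a^2 + 6*a + 1 := by ring
  set m := 3*a^2 + 3*a + 1 with hm
  have hn3 : (3*a+1)^2 + (3*a+1) + 1 = 3 * m := by rw [hm]; omega
  have hr : (3*a+1) - 1 = 3 * a := by omega
  have hdvd' : 3 * m ∣ 3 * (a * v) := by
    rw [← hn3]
    have : (3*a+1-1) * v = 3 * (a * v) := by rw [hr]; ring
    rwa [this] at hdvd
  have hmav : m ∣ a * v := (mul_dvd_mul_iff_left (by norm_num : (3:ℕ) ≠ 0)).mp hdvd'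
  have hgcd : Nat.gcd (3*a) (3*m) = 3 := by
    rw [← hr, ← hn3, gcd_q_sub_one _ hq2, hr]
    exact Nat.gcd_eq_right ⟨a, by ring⟩
  have hco : Nat.Coprime a m := by
    have := Nat.gcd_mul_left 3 a m
    unfold Nat.Coprime
    omega
  have hmv : m ∣ v := (Nat.Coprime.symm hco).dvd_of_dvd_mul_left hmav
  have hdiv : ((3*a+1)^2 + (3*a+1) + 1)/3 = m := by omega
  obtain ⟨w, rfl⟩ := hmv
  have hm0 : 0 < m := by omega
  have hw : w < 3 := by
    by_contra hw
    push_neg at hw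
    have : 3 * m ≤ m * w := by
      calc 3 * m = m * 3 := by ring
      _ ≤ m * w := Nat.mul_le_mul_left m hw
    omega
  interval_cases w
  · left; omega
  · right; left; omega
  · right; right; omega


lemma trace_one_ne_zero {q : ℕ} (hq2 : 2 ≤ q) (K L : Type*) [Field K] [Field L]
    [Algebra K L] [Fintype K] [Fintype L]
    (hK : Fintype.card K = q) (hL : Fintype.card L = q ^ 3) (h3 : ¬ 3 ∣ q) :
    Algebra.trace K L (1 : L) ≠ 0 := by
  haveI : FiniteDimensional K L := Module.Finite.of_finite
  have hrank : Module.finrank K L = 3 := by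
    have h := Module.card_eq_pow_finrank (K := K) (V := L)
    rw [hK, hL] at h
    exact (Nat.pow_right_injective hq2 h.symm)
  have h1 : Algebra.trace K L (1 : L) = (3 : K) := by
    have := Algebra.trace_algebraMap (R := K) (S := L) (1 : K)
    rw [map_one] at this
    rw [this, hrank]
    simp
  rw [h1]
  intro hz
  set p := ringChar K with hp
  have hpp : p.Prime := CharP.char_is_prime K p
  have hdvd : p ∣ 3 := by
    have := (CharP.cast_eq_zero_iff K p 3).mp hz
    exact this
  have hp3 : p = 3 := (Nat.prime_dvd_prime_iff_eq hpp Nat.prime_three).mp hdvd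
  obtain ⟨k, -, hcard⟩ := FiniteField.card K p
  apply h3
  rw [← hK, hcard, hp3]
  exact dvd_pow_self 3 (by positivity)

/-- For `K` a finite field with `q` elements, `L/K` with `|L| = q³`, `α` a generator of
`Lˣ`, `G = ℤ/(q²+q+1)ℤ` and `S = {l ∈ G : Tr_{L/K}(α^l) = 0}`: there are at least
`2^{R(q)}` triangle presentations compatible with `F(G,S)`. -/
theorem card_trianglePresentations_singer_ge (q : ℕ) (hq : IsPrimePow q) (K L : Type*)
    [Field K] [Field L] [Algebra K L] [Fintype K] [Fintype L]
    (hK : Fintype.card K = q) (hL : Fintype.card L = q ^ 3)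
    (α : Lˣ) (hα : ∀ u : Lˣ, u ∈ Subgroup.zpowers α)
    (S : Set (ZMod (q ^ 2 + q + 1)))
    (hS : S = {l : ZMod (q ^ 2 + q + 1) | Algebra.trace K L ((α : L) ^ l.val) = 0}) :
    2 ^ Rq q ≤
      {T : Set (ZMod (q ^ 2 + q + 1) × ZMod (q ^ 2 + q + 1) × ZMod (q ^ 2 + q + 1)) |
        IsTrianglePresentationAdd (FGSAdd S) T}.ncard := by
  classical
  have hq2 : 2 ≤ q := hq.two_le
  haveI : NeZero (q^2+q+1) := ⟨by positivity⟩
  set qz : ZMod (q^2+q+1) := ((q : ℕ) : ZMod (q^2+q+1)) with hqz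
  set Sf := Finset.univ.filter (fun l : ZMod (q^2+q+1) =>
    Algebra.trace K L ((α : L) ^ l.val) = 0) with hSfdef
  have hmemS : ∀ l, l ∈ S ↔ l ∈ Sf := by
    intro l
    rw [hS, hSfdef]
    simp
  have hcards : Sf.card = q + 1 := by
    have h := card_S hq2 K L hK hL α hα
    rw [← hSfdef] at h
    have e : (q+1) * (q-1) = q^2 - 1 := by
      obtain ⟨m, rfl⟩ : ∃ m, q = m + 2 := ⟨q - 2, by omega⟩
      have e1 : (m+2+1) * (m+2-1) = m^2 + 4*m + 3 := by
        rw [show m+2-1 = m+1 from rfl]; ring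
      have e2 : (m+2)^2 = m^2 + 4*m + 4 := by ring
      omega
    rw [← e] at h
    exact Nat.eq_of_mul_eq_mul_right (by omega : 0 < q - 1) h
  have hnzero : qz^2 + qz + 1 = 0 := by
    have h := ZMod.natCast_self (q^2+q+1)
    push_cast at h
    rw [hqz]
    exact h
  have hcube : qz^3 = 1 := by linear_combination (qz - 1) * hnzero
  have hq3 : ∀ s : ZMod (q^2+q+1), qz * (qz * (qz * s)) = s := by
    intro s
    calc qz * (qz * (qz * s)) = qz^3 * s := by ring
    _ = s := by rw [hcube, one_mul]
  have hsum : ∀ s : ZMod (q^2+q+1), s + qz * s + qz * (qz * s) = 0 := by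
    intro s
    linear_combination s * hnzero
  have hμS : ∀ s ∈ Sf, qz * s ∈ Sf := by
    intro s hs
    rw [hSfdef, Finset.mem_filter] at hs ⊢
    refine ⟨Finset.mem_univ _, ?_⟩
    have hcong : (qz*s).val ≡ q * s.val [MOD q^2+q+1] := by
      apply (ZMod.natCast_eq_natCast_iff _ _ _).mp
      rw [ZMod.natCast_val, ZMod.cast_id]
      push_cast
      rw [ZMod.natCast_val, ZMod.cast_id, hqz]
    rw [trace_pow_congr hq2 K L hK hL α hα _ _ hcong, mul_comm, pow_mul,
      trace_pow_card_eq K L hK]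
    exact hs.2
  have hnf1 : ∀ s : ZMod (q^2+q+1), qz * s ≠ s → qz * (qz * s) ≠ qz * s := by
    intro s hs heq
    apply hs
    have h2 := congrArg (fun x => qz * x) heq
    rw [hq3 s] at h2
    rw [← h2] at heq
    exact heq.symm
  have hnf2 : ∀ s : ZMod (q^2+q+1), qz * s ≠ s →
      qz * (qz * (qz * s)) ≠ qz * (qz * s) := by
    intro s hs
    rw [hq3 s]
    intro heq
    apply hs
    have h2 := congrArg (fun x => qz * x) heq
    rw [hq3 s] at h2
    exact h2
  set Fix := Sf.filter (fun s => qz * s = s) with hFixdef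
  set A := Sf.filter (fun s => ¬ (qz * s = s)) with hAdef
  have hsplit : Fix.card + A.card = Sf.card :=
    Finset.card_filter_add_card_filter_not _
  have h0S : (¬ 3 ∣ q) → (0 : ZMod (q^2+q+1)) ∉ Sf := by
    intro h3 h0
    rw [hSfdef, Finset.mem_filter] at h0
    have h2 := h0.2
    rw [ZMod.val_zero, pow_zero] at h2
    exact trace_one_ne_zero hq2 K L hK hL h3 h2
  have hvaleq : ∀ s : ZMod (q^2+q+1), ((s.val : ℕ) : ZMod (q^2+q+1)) = s := by
    intro s
    rw [ZMod.natCast_val, ZMod.cast_id]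
  have hfix1 : q % 3 = 1 → Fix.card ≤ 2 := by
    intro h3
    have hsub : Fix ⊆ {(((q^2+q+1)/3 : ℕ) : ZMod (q^2+q+1)),
        ((2*((q^2+q+1)/3) : ℕ) : ZMod (q^2+q+1))} := by
      intro s hsmem
      rw [hFixdef, Finset.mem_filter] at hsmem
      obtain ⟨hsS, hfx⟩ := hsmem
      have hdvd := fixed_dvd hq2 s hfx
      rcases fixed_val_cases hq2 h3 (ZMod.val_lt s) hdvd with h0 | hm | hm
      · exfalso
        have hz : s = 0 := (ZMod.val_eq_zero s).mp h0
        rw [hz] at hsS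
        exact h0S (by omega) hsS
      · rw [Finset.mem_insert]
        left
        rw [← hvaleq s, hm]
      · rw [Finset.mem_insert, Finset.mem_singleton]
        right
        rw [← hvaleq s, hm]
    calc Fix.card ≤ _ := Finset.card_le_card hsub
    _ ≤ 2 := by
      refine (Finset.card_insert_le _ _).trans ?_
      simp
  have hfix0 : q % 3 = 0 → Fix.card ≤ 1 := by
    intro h3
    have hsub : Fix ⊆ {(0 : ZMod (q^2+q+1))} := by
      intro s hsmem
      rw [hFixdef, Finset.mem_filter] at hsmem
      have hdvd := fixed_dvd hq2 s hsmem.2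
      have h0 := fixed_val_eq_zero hq2 (by omega) (ZMod.val_lt s) hdvd
      rw [Finset.mem_singleton, ← hvaleq s, h0]
      simp
    calc Fix.card ≤ _ := Finset.card_le_card hsub
    _ = 1 := Finset.card_singleton _
  have hfix2 : q % 3 = 2 → Fix.card = 0 := by
    intro h3
    rw [Finset.card_eq_zero]
    apply Finset.eq_empty_of_forall_notMem
    intro s hsmem
    rw [hFixdef, Finset.mem_filter] at hsmem
    obtain ⟨hsS, hfx⟩ := hsmem
    have hdvd := fixed_dvd hq2 s hfx
    have h0 := fixed_val_eq_zero hq2 (by omega) (ZMod.val_lt s) hdvd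
    have hz : s = 0 := (ZMod.val_eq_zero s).mp h0
    rw [hz] at hsS
    exact h0S (by omega) hsS
  have hAcard : 3 * Rq q ≤ A.card := by
    have hm3 : q % 3 = 0 ∨ q % 3 = 1 ∨ q % 3 = 2 := by omega
    rcases hm3 with h3 | h3 | h3
    · have hfb := hfix0 h3
      simp only [Rq, h3]
      norm_num
      omega
    · have hfb := hfix1 h3
      simp only [Rq, h3]
      norm_num
      omega
    · have hfb := hfix2 h3
      simp only [Rq, h3]
      norm_num
      omega
  have hAinv : ∀ a ∈ A, qz * a ∈ A := by
    intro a ha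
    rw [hAdef, Finset.mem_filter] at ha ⊢
    exact ⟨hμS a ha.1, hnf1 a ha.2⟩
  have hAnf : ∀ a ∈ A, qz * a ≠ a := by
    intro a ha
    exact (Finset.mem_filter.mp ha).2
  obtain ⟨f, hfcard, hf⟩ := exists_invariant_family (fun s => qz * s) hq3
    (Rq q) A hAinv hAnf hAcard
  set σ : Finset (ZMod (q^2+q+1)) → ZMod (q^2+q+1) → ZMod (q^2+q+1) :=
    fun E s => if qz * s = s then s else if s ∈ E then qz * s else qz * (qz * s) with hσdef
  have hσS : ∀ E, ∀ s ∈ S, σ E s ∈ S := by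
    intro E s hs
    rw [hmemS] at hs ⊢
    rw [hσdef]
    dsimp only
    split_ifs with h1 h2
    · exact hs
    · exact hμS s hs
    · exact hμS _ (hμS s hs)
  have hσsum : ∀ E ∈ f, ∀ s ∈ S, s + σ E s + σ E (σ E s) = 0 := by
    intro E hE s hs
    obtain ⟨hEsub, hEinv⟩ := hf E hE
    by_cases h1 : qz * s = s
    · have e1 : σ E s = s := by rw [hσdef]; dsimp only; rw [if_pos h1]
      rw [e1, e1]
      have h := hsum s
      rw [h1, h1] at h
      exact h
    · by_cases h2 : s ∈ E
      · have e1 : σ E s = qz * s := by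
          rw [hσdef]; dsimp only; rw [if_neg h1, if_pos h2]
        have e2 : σ E (qz * s) = qz * (qz * s) := by
          rw [hσdef]; dsimp only; rw [if_neg (hnf1 s h1), if_pos ((hEinv s).mp h2)]
        rw [e1, e2]
        exact hsum s
      · have hnotE : qz * (qz * s) ∉ E := by
          intro hc
          have h3 := (hEinv (qz * (qz * s))).mp hc
          rw [hq3 s] at h3
          exact h2 h3
        have e1 : σ E s = qz * (qz * s) := by
          rw [hσdef]; dsimp only; rw [if_neg h1, if_neg h2]
        have e2 : σ E (qz * (qz * s)) = qz * s := by
          rw [hσdef]; dsimp only; rw [if_neg (hnf2 s h1), if_neg hnotE, hq3 s]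
        rw [e1, e2]
        linear_combination hsum s
  have hinj : ∀ E ∈ f, ∀ E' ∈ f, TPres S (σ E) = TPres S (σ E') → E = E' := by
    have key : ∀ E ∈ f, ∀ E' ∈ f, TPres S (σ E) = TPres S (σ E') → E ⊆ E' := by
      intro E hE E' hE' heq a ha
      have haA : a ∈ A := (hf E hE).1 ha
      have haS : a ∈ S := (hmemS a).mpr (Finset.mem_filter.mp haA).1
      have hanf : ¬ (qz * a = a) := (Finset.mem_filter.mp haA).2
      have hσa := TPres_inj S (σ E) (σ E') a haS heq
      have e1 : σ E a = qz * a := by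
        rw [hσdef]; dsimp only; rw [if_neg hanf, if_pos ha]
      by_contra ha'
      have e2 : σ E' a = qz * (qz * a) := by
        rw [hσdef]; dsimp only; rw [if_neg hanf, if_neg ha']
      rw [e1, e2] at hσa
      exact hnf1 a hanf hσa.symm
    intro E hE E' hE' heq
    exact Finset.Subset.antisymm (key E hE E' hE' heq) (key E' hE' E hE heq.symm)
  set g : Finset (Set (ZMod (q^2+q+1) × ZMod (q^2+q+1) × ZMod (q^2+q+1))) :=
    f.image (fun E => TPres S (σ E)) with hgdef
  have hgcard : g.card = 2 ^ Rq q := by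
    rw [hgdef, Finset.card_image_of_injOn, hfcard]
    intro E hE E' hE' heq
    exact hinj E (Finset.mem_coe.mp hE) E' (Finset.mem_coe.mp hE') heq
  have hgsub : (↑g : Set _) ⊆
      {T : Set (ZMod (q^2+q+1) × ZMod (q^2+q+1) × ZMod (q^2+q+1)) |
        IsTrianglePresentationAdd (FGSAdd S) T} := by
    intro T hT
    rw [hgdef] at hT
    simp only [Finset.coe_image, Set.mem_image, Finset.mem_coe] at hT
    obtain ⟨E, hE, rfl⟩ := hT
    exact TPres_isPresentation S (σ E) (hσS E) (hσsum E hE)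
  calc (2:ℕ) ^ Rq q = g.card := hgcard.symm
  _ = (↑g : Set _).ncard := (Set.ncard_coe_finset g).symm
  _ ≤ _ := Set.ncard_le_ncard hgsub (Set.toFinite _)
end

section
/- Let q be a prime power and K a finite field with q elements. For y, z ∈ K let g(y,z) denote the 3×3 matrix over K with rows (1, y, z), (0, 1, y), (0, 0, 1). Let U₁ = {3×3 matrices with rows (1, x, 0), (0, 1, 0), (0, 0, 1) : x ∈ K} and U₂ = {3×3 matrices with rows (1, 0, 0), (0, 1, y), (0, 0, 1) : y ∈ K}, and let S = {g(y, y²) : y ∈ K}. Then for all y₁, z₁, y₂, z₂ ∈ K, the following are equivalent: (i) the cosets g(y₁,z₁)·U₁ and g(y₂,z₂)·U₂ have nonempty intersection; (ii) g(y₁,z₁)⁻¹·g(y₂,z₂) ∈ S; (iii) −z₁ + z₂ − y₂·(y₂ − y₁) = 0. -/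
/-- The upper unitriangular matrix with rows `(1, y, z)`, `(0, 1, y)`, `(0, 0, 1)`. -/
def gMat {K : Type*} [Field K] (y z : K) : Matrix (Fin 3) (Fin 3) K :=
  !![1, y, z; 0, 1, y; 0, 0, 1]

/-- The subgroup `U₁` of matrices with rows `(1, x, 0)`, `(0, 1, 0)`, `(0, 0, 1)`. -/
def U₁ (K : Type*) [Field K] : Set (Matrix (Fin 3) (Fin 3) K) :=
  {M | ∃ x : K, M = !![1, x, 0; 0, 1, 0; 0, 0, 1]}

/-- The subgroup `U₂` of matrices with rows `(1, 0, 0)`, `(0, 1, y)`, `(0, 0, 1)`. -/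
def U₂ (K : Type*) [Field K] : Set (Matrix (Fin 3) (Fin 3) K) :=
  {M | ∃ y : K, M = !![1, 0, 0; 0, 1, y; 0, 0, 1]}

/-- `S = {g(y, y²) : y ∈ K}`. -/
def SMat (K : Type*) [Field K] : Set (Matrix (Fin 3) (Fin 3) K) :=
  {M | ∃ y : K, M = gMat y (y ^ 2)}

lemma gMat_mul {K : Type*} [Field K] (a b c d : K) :
    gMat a b * gMat c d = gMat (a + c) (b + d + a * c) := by
  simp [gMat, Matrix.mul_fin_three]
  ring_nf
  simp

lemma gMat_inv {K : Type*} [Field K] (a b : K) :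
    (gMat a b)⁻¹ = gMat (-a) (a ^ 2 - b) := by
  apply Matrix.inv_eq_right_inv
  rw [gMat_mul]
  have : (1 : Matrix (Fin 3) (Fin 3) K) = !![1,0,0;0,1,0;0,0,1] := Matrix.one_fin_three
  rw [this]
  simp [gMat]
  ring_nf

lemma gMat_inj {K : Type*} [Field K] {a b c d : K} (h : gMat a b = gMat c d) :
    a = c ∧ b = d := by
  constructor
  · have := congrFun (congrFun h 0) 1
    simpa [gMat] using this
  · have := congrFun (congrFun h 0) 2
    simpa [gMat] using this

/-- For all `y₁, z₁, y₂, z₂ ∈ K`, the following are equivalent: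
(i) the cosets `g(y₁,z₁)U₁` and `g(y₂,z₂)U₂` meet;
(ii) `g(y₁,z₁)⁻¹ g(y₂,z₂) ∈ S`;
(iii) `-z₁ + z₂ - y₂(y₂ - y₁) = 0`. -/
theorem coset_intersection_iff (q : ℕ) (hq : IsPrimePow q) (K : Type*) [Field K]
    [Fintype K] (hK : Fintype.card K = q) (y₁ z₁ y₂ z₂ : K) :
    ((∃ u₁ ∈ U₁ K, ∃ u₂ ∈ U₂ K, gMat y₁ z₁ * u₁ = gMat y₂ z₂ * u₂) ↔
      (gMat y₁ z₁)⁻¹ * gMat y₂ z₂ ∈ SMat K) ∧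
    ((gMat y₁ z₁)⁻¹ * gMat y₂ z₂ ∈ SMat K ↔ -z₁ + z₂ - y₂ * (y₂ - y₁) = 0) := by
  have h23 : (gMat y₁ z₁)⁻¹ * gMat y₂ z₂ ∈ SMat K ↔ -z₁ + z₂ - y₂ * (y₂ - y₁) = 0 := by
    rw [gMat_inv, gMat_mul]
    constructor
    · rintro ⟨y, hy⟩
      obtain ⟨h1, h2⟩ := gMat_inj hy
      subst h1
      linear_combination h2
    · intro h
      exact ⟨-y₁ + y₂, by
        rw [show y₁ ^ 2 - z₁ + z₂ + -y₁ * y₂ = (-y₁ + y₂) ^ 2 by linear_combination h]⟩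
  have h13 : (∃ u₁ ∈ U₁ K, ∃ u₂ ∈ U₂ K, gMat y₁ z₁ * u₁ = gMat y₂ z₂ * u₂) ↔
      -z₁ + z₂ - y₂ * (y₂ - y₁) = 0 := by
    constructor
    · rintro ⟨u₁, ⟨x, rfl⟩, u₂, ⟨y, rfl⟩, h⟩
      have e02 := congrFun (congrFun h 0) 2
      have e12 := congrFun (congrFun h 1) 2
      simp [gMat, Matrix.mul_apply, Fin.sum_univ_succ] at e02 e12
      subst e12
      linear_combination -e02
    · intro h
      refine ⟨_, ⟨y₂ - y₁, rfl⟩, _, ⟨y₁ - y₂, rfl⟩, ?_⟩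
      ext i j
      fin_cases i <;> fin_cases j <;>
        simp [gMat, Matrix.mul_apply, Fin.sum_univ_succ] <;> linear_combination -h
  exact ⟨h13.trans h23.symm, h23⟩
end

section
/- Let q be a prime power with q ≡ 1 (mod 3) and K a finite field with q elements. Let G be the group of 3×3 matrices over K of the form with rows (1, y, z), (0, 1, y), (0, 0, 1) for y, z ∈ K (a subgroup of GL₃(K)), and let S ⊆ G be the subset of matrices of this form with z = y². Then the number of distinct triangle presentations compatible with F(G,S) is at least 2^{(q−1)/3}. -/
/-- The matrix with rows `(1, y, z)`, `(0, 1, y)`, `(0, 0, 1)`. -/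
def heisMat {K : Type*} [Field K] (y z : K) : Matrix (Fin 3) (Fin 3) K :=
  !![1, y, z; 0, 1, y; 0, 0, 1]

lemma heisMat_mul {K : Type*} [Field K] (y z y' z' : K) :
    heisMat y z * heisMat y' z' = heisMat (y + y') (z + z' + y * y') := by
  simp only [heisMat, Matrix.mul_fin_three]
  congr 1 <;> ring_nf

lemma heisMat_zero {K : Type*} [Field K] :
    (heisMat 0 0 : Matrix (Fin 3) (Fin 3) K) = 1 := by
  simp only [heisMat, Matrix.one_fin_three]

lemma heisMat_mul_inv {K : Type*} [Field K] (y z : K) :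
    heisMat y z * heisMat (-y) (y * y - z) = 1 := by
  rw [heisMat_mul, show y + -y = (0 : K) by ring,
    show z + (y * y - z) + y * -y = (0 : K) by ring, heisMat_zero]

lemma heisMat_inv_mul {K : Type*} [Field K] (y z : K) :
    heisMat (-y) (y * y - z) * heisMat y z = 1 := by
  rw [heisMat_mul, show -y + y = (0 : K) by ring,
    show (y * y - z) + z + -y * y = (0 : K) by ring, heisMat_zero]

/-- The unit of the matrix ring given by `heisMat y z`. -/
def heisUnit {K : Type*} [Field K] (y z : K) : (Matrix (Fin 3) (Fin 3) K)ˣ :=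
  ⟨heisMat y z, heisMat (-y) (y * y - z), heisMat_mul_inv y z, heisMat_inv_mul y z⟩

/-- The group `G` of matrices with rows `(1, y, z)`, `(0, 1, y)`, `(0, 0, 1)`,
`y, z ∈ K`, as a subgroup of `GL₃(K)`. -/
def HeisSubgroup (K : Type*) [Field K] : Subgroup (Matrix (Fin 3) (Fin 3) K)ˣ where
  carrier := {u | ∃ y z : K, (u : Matrix (Fin 3) (Fin 3) K) = heisMat y z}
  one_mem' := ⟨0, 0, by rw [Units.val_one, heisMat_zero]⟩
  mul_mem' := by
    rintro a b ⟨y, z, ha⟩ ⟨y', z', hb⟩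
    exact ⟨y + y', z + z' + y * y', by rw [Units.val_mul, ha, hb, heisMat_mul]⟩
  inv_mem' := by
    rintro a ⟨y, z, ha⟩
    refine ⟨-y, y * y - z, ?_⟩
    have h1 : (a : Matrix (Fin 3) (Fin 3) K) * heisMat (-y) (y * y - z) = 1 := by
      rw [ha]; exact heisMat_mul_inv y z
    calc ((a⁻¹ : (Matrix (Fin 3) (Fin 3) K)ˣ) : Matrix (Fin 3) (Fin 3) K)
        = ↑a⁻¹ * ((a : Matrix (Fin 3) (Fin 3) K) * heisMat (-y) (y * y - z)) := by
          rw [h1, mul_one]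
      _ = heisMat (-y) (y * y - z) := by
          rw [← mul_assoc, Units.inv_mul, one_mul]

section HeisAux

variable {K : Type*} [Field K]

/-- Packaging `heisUnit y z` as an element of `HeisSubgroup K`. -/
def heisPhi (y z : K) : HeisSubgroup K := ⟨heisUnit y z, y, z, rfl⟩

lemma heisPhi_coe (y z : K) :
    (((heisPhi y z : HeisSubgroup K) : (Matrix (Fin 3) (Fin 3) K)ˣ) :
      Matrix (Fin 3) (Fin 3) K) = heisMat y z := rfl

lemma heisPhi_mul (y z y' z' : K) :
    heisPhi y z * heisPhi y' z' = heisPhi (y + y') (z + z' + y * y') := by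
  apply Subtype.ext
  apply Units.ext
  show (heisMat y z) * heisMat y' z' = heisMat (y + y') (z + z' + y * y')
  exact heisMat_mul y z y' z'

lemma heisPhi_zero : (heisPhi 0 0 : HeisSubgroup K) = 1 := by
  apply Subtype.ext
  apply Units.ext
  show heisMat (0 : K) 0 = 1
  exact heisMat_zero

lemma heisPhi_inj {y z y' z' : K} (h : heisPhi y z = heisPhi y' z') :
    y = y' ∧ z = z' := by
  have h' : heisMat y z = heisMat y' z' := by
    have := congrArg (fun u : HeisSubgroup K =>
      ((u : (Matrix (Fin 3) (Fin 3) K)ˣ) : Matrix (Fin 3) (Fin 3) K)) h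
    exact this
  exact ⟨congrFun (congrFun h' 0) 1, congrFun (congrFun h' 0) 2⟩

end HeisAux

/-- A function `l : G → G` preserving `S` and satisfying `s * l s * l (l s) = 1` on `S`
yields a triangle presentation. -/
lemma triangle_of_fun {G : Type*} [Group G] (S : Set G) (l : G → G)
    (hmem : ∀ s ∈ S, l s ∈ S)
    (hcond : ∀ s ∈ S, s * l s * l (l s) = 1) :
    IsTrianglePresentationG (FGS S)
      {p : G × G × G | ∃ x : G, ∃ s ∈ S, p = (x, x * s, x * s * l s)} := by
  refine ⟨?_, ?_, ?_⟩
  · rintro x y z ⟨x', s, hs, h⟩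
    simp only [Prod.mk.injEq] at h
    obtain ⟨rfl, rfl, rfl⟩ := h
    exact ⟨x, s, hs, rfl⟩
  · rintro x y ⟨x', s, hs, h⟩
    simp only [Prod.mk.injEq] at h
    obtain ⟨rfl, rfl⟩ := h
    refine ⟨x * s * l s, ⟨x, s, hs, rfl⟩, ?_⟩
    rintro z' ⟨x'', s'', hs'', h''⟩
    simp only [Prod.mk.injEq] at h''
    obtain ⟨h1, h2, h3⟩ := h''
    subst h1
    rw [h3, mul_left_cancel h2]
  · rintro x y z ⟨x', s, hs, h⟩
    simp only [Prod.mk.injEq] at h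
    obtain ⟨rfl, rfl, rfl⟩ := h
    refine ⟨x * s, l s, hmem s hs, ?_⟩
    have h4 : x * s * l s * l (l s) = x := by
      rw [mul_assoc x s (l s), mul_assoc x (s * l s), hcond s hs, mul_one]
    rw [h4]

/-- Two such functions giving the same triangle presentation agree on `S`. -/
lemma triangle_fun_eq_on {G : Type*} [Group G] (S : Set G) (l l' : G → G)
    (h : {p : G × G × G | ∃ x : G, ∃ s ∈ S, p = (x, x * s, x * s * l s)} =
         {p : G × G × G | ∃ x : G, ∃ s ∈ S, p = (x, x * s, x * s * l' s)})
    {s : G} (hs : s ∈ S) : l s = l' s := by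
  have hmem : ((1 : G), 1 * s, 1 * s * l s) ∈
      {p : G × G × G | ∃ x : G, ∃ s ∈ S, p = (x, x * s, x * s * l s)} :=
    ⟨1, s, hs, rfl⟩
  rw [h] at hmem
  obtain ⟨x', s', hs', he⟩ := hmem
  simp only [Prod.mk.injEq] at he
  obtain ⟨rfl, h2, h3⟩ := he
  have hss : s = s' := mul_left_cancel h2
  subst hss
  have h3' : s * l s = s * l' s := by simpa using h3
  exact mul_left_cancel h3'

/-- For `q ≡ 1 (mod 3)`, `K` the field with `q` elements, `G` the group of matrices with
rows `(1, y, z)`, `(0, 1, y)`, `(0, 0, 1)` and `S ⊆ G` the subset with `z = y²`: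
there are at least `2^{(q-1)/3}` triangle presentations compatible with `F(G,S)`. -/
theorem card_trianglePresentations_heis_ge (q : ℕ) (hq : IsPrimePow q)
    (hq3 : q % 3 = 1) (K : Type*) [Field K] [Fintype K] (hK : Fintype.card K = q)
    (S : Set (HeisSubgroup K))
    (hS : S = {u : HeisSubgroup K |
      ∃ y : K, ((u : (Matrix (Fin 3) (Fin 3) K)ˣ) : Matrix (Fin 3) (Fin 3) K) =
        heisMat y (y ^ 2)}) :
    2 ^ ((q - 1) / 3) ≤
      {T : Set (HeisSubgroup K × HeisSubgroup K × HeisSubgroup K) |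
        IsTrianglePresentationG (FGS S) T}.ncard := by
    classical
  -- `Kˣ` has an element of order 3
  haveI : Fintype Kˣ := Fintype.ofFinite Kˣ
  have hcardU : Nat.card Kˣ = q - 1 := by
    rw [Nat.card_units, Nat.card_eq_fintype_card, hK]
  have h3 : 3 ∣ q - 1 := by
    have h2q := hq.two_le
    omega
  haveI : Fact (Nat.Prime 3) := ⟨by norm_num⟩
  obtain ⟨ζ, hζord⟩ : ∃ ζ : Kˣ, orderOf ζ = 3 :=
    exists_prime_orderOf_dvd_card 3 (by rw [← Nat.card_eq_fintype_card, hcardU]; exact h3)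
  set z : K := (ζ : K) with hzdef
  have hz0 : z ≠ 0 := ζ.ne_zero
  have hz3 : z ^ 3 = 1 := by
    have : ζ ^ 3 = 1 := by rw [← hζord]; exact pow_orderOf_eq_one ζ
    have := congrArg (Units.val) this
    simpa using this
  have hz1 : z ≠ 1 := by
    intro h
    have : ζ = 1 := Units.ext (by rw [Units.val_one]; exact h)
    rw [this, orderOf_one] at hζord
    omega
  have hzq : z ^ 2 + z + 1 = 0 := by
    have hfac : (z - 1) * (z ^ 2 + z + 1) = 0 := by linear_combination hz3
    rcases mul_eq_zero.mp hfac with h | h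
    · exact absurd (by linear_combination h) hz1
    · exact h
  -- The quotient by the cube-roots subgroup
  set Q := Kˣ ⧸ Subgroup.zpowers ζ with hQdef
  have hQcard : Nat.card Q = (q - 1) / 3 := by
    have hc := Subgroup.card_eq_card_quotient_mul_card_subgroup (Subgroup.zpowers ζ)
    rw [Nat.card_zpowers, hζord, hcardU] at hc
    have hc' : q - 1 = Nat.card Q * 3 := hc
    omega
  -- Quotient classes are invariant under multiplication by powers of ζ
  have hclass : ∀ (w u : Kˣ), w ∈ Subgroup.zpowers ζ →
      (QuotientGroup.mk (w * u) : Q) = QuotientGroup.mk u := by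
    intro w u hw
    rw [QuotientGroup.eq]
    have he : (w * u)⁻¹ * u = w⁻¹ := by
      rw [mul_comm w u, mul_inv_rev, mul_assoc, inv_mul_cancel, mul_one]
    rw [he]
    exact inv_mem hw
  -- The family of "rotation" functions
  set g : (Q → Bool) → K → K := fun f a =>
    if ha : a = 0 then 0
    else (if f (QuotientGroup.mk (Units.mk0 a ha)) then z else z ^ 2) * a with hgdef
  have hg : ∀ (f : Q → Bool) (a : K), ∃ c : K,
      c ^ 2 + c + 1 = 0 ∧ g f a = c * a ∧ g f (g f a) = c ^ 2 * a := by
    intro f a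
    by_cases ha : a = 0
    · exact ⟨z, hzq, by simp [hgdef, ha], by simp [hgdef, ha]⟩
    · have hz20 : z ^ 2 ≠ 0 := pow_ne_zero 2 hz0
      have hza : z * a ≠ 0 := mul_ne_zero hz0 ha
      have hz2a : z ^ 2 * a ≠ 0 := mul_ne_zero hz20 ha
      have hmk1 : Units.mk0 (z * a) hza = ζ * Units.mk0 a ha := Units.ext rfl
      have hmk2 : Units.mk0 (z ^ 2 * a) hz2a = ζ ^ 2 * Units.mk0 a ha := Units.ext (by
        simp [hzdef])
      have hq1 : (QuotientGroup.mk (Units.mk0 (z * a) hza) : Q) =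
          QuotientGroup.mk (Units.mk0 a ha) := by
        rw [hmk1]; exact hclass _ _ (Subgroup.mem_zpowers ζ)
      have hq2 : (QuotientGroup.mk (Units.mk0 (z ^ 2 * a) hz2a) : Q) =
          QuotientGroup.mk (Units.mk0 a ha) := by
        rw [hmk2]; exact hclass _ _ (pow_mem (Subgroup.mem_zpowers ζ) 2)
      by_cases hf : f (QuotientGroup.mk (Units.mk0 a ha))
      · refine ⟨z, hzq, ?_, ?_⟩
        · simp [hgdef, ha, hf]
        · have e1 : g f a = z * a := by simp [hgdef, ha, hf]
          rw [e1]
          simp only [hgdef, dif_neg hza]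
          rw [hq1, if_pos hf]
          ring
      · refine ⟨z ^ 2, by linear_combination z ^ 2 * hzq - hz3, ?_, ?_⟩
        · simp [hgdef, ha, hf]
        · have e1 : g f a = z ^ 2 * a := by simp [hgdef, ha, hf]
          rw [e1]
          simp only [hgdef, dif_neg hz2a]
          rw [hq2, if_neg hf]
          have : z ^ 2 * (z ^ 2 * a) = (z ^ 2) ^ 2 * a := by ring
          rw [this]
  -- Membership in `S`
  have hScond : ∀ u : HeisSubgroup K, u ∈ S ↔ ∃ a : K, u = heisPhi a (a ^ 2) := by
    intro u
    rw [hS]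
    constructor
    · rintro ⟨y, hy⟩
      exact ⟨y, Subtype.ext (Units.ext hy)⟩
    · rintro ⟨a, rfl⟩
      exact ⟨a, rfl⟩
  -- The coordinate function and lift to `G`
  set yc : HeisSubgroup K → K := fun u => ((u : (Matrix (Fin 3) (Fin 3) K)ˣ) :
    Matrix (Fin 3) (Fin 3) K) 0 1 with hycdef
  have hyc : ∀ a b : K, yc (heisPhi a b) = a := fun a b => rfl
  set l : (Q → Bool) → HeisSubgroup K → HeisSubgroup K := fun f u => heisPhi (g f (yc u)) ((g f (yc u)) ^ 2)
    with hldef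
  have hlmem : ∀ (f : Q → Bool), ∀ s ∈ S, l f s ∈ S := by
    intro f s _
    exact (hScond _).mpr ⟨g f (yc s), rfl⟩
  have hlcond : ∀ (f : Q → Bool), ∀ s ∈ S, s * l f s * l f (l f s) = 1 := by
    intro f s hs
    obtain ⟨a, rfl⟩ := (hScond s).mp hs
    obtain ⟨c, hc, h1, h2⟩ := hg f a
    have e1 : l f (heisPhi a (a ^ 2)) = heisPhi (c * a) ((c * a) ^ 2) := by
      simp only [hldef, hyc, h1]
    have e2 : l f (heisPhi (c * a) ((c * a) ^ 2)) =
        heisPhi (c ^ 2 * a) ((c ^ 2 * a) ^ 2) := by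
      simp only [hldef, hyc]
      rw [← h1, h2]
    rw [e1, e2, heisPhi_mul, heisPhi_mul, ← heisPhi_zero]
    congr 1
    · linear_combination a * hc
    · linear_combination (a ^ 2 * (c ^ 2 + 1)) * hc
  -- The family of triangle presentations
  set T : (Q → Bool) → Set (HeisSubgroup K × HeisSubgroup K × HeisSubgroup K) := fun f =>
    {p : HeisSubgroup K × HeisSubgroup K × HeisSubgroup K | ∃ x : HeisSubgroup K, ∃ s ∈ S, p = (x, x * s, x * s * l f s)} with hTdef
  have hTtri : ∀ f, IsTrianglePresentationG (FGS S) (T f) := fun f =>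
    triangle_of_fun S (l f) (hlmem f) (hlcond f)
  have hTinj : Function.Injective T := by
    intro f f' hT
    by_contra hne
    obtain ⟨qc, hqc⟩ : ∃ qc : Q, f qc ≠ f' qc := by
      by_contra hco
      push_neg at hco
      exact hne (funext hco)
    set a : Kˣ := Quotient.out qc with hadef
    have hout : (QuotientGroup.mk a : Q) = qc := QuotientGroup.out_eq' qc
    have ha : (a : K) ≠ 0 := a.ne_zero
    have hsS : heisPhi (a : K) ((a : K) ^ 2) ∈ S := (hScond _).mpr ⟨_, rfl⟩
    have heq := triangle_fun_eq_on S (l f) (l f') hT hsS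
    simp only [hldef, hyc] at heq
    have h1 : g f (a : K) = g f' (a : K) := (heisPhi_inj heq).1
    have hmk0 : Units.mk0 (a : K) ha = a := Units.ext rfl
    simp only [hgdef, dif_neg ha, hmk0, hout] at h1
    have h2 : (if f qc then z else z ^ 2) = (if f' qc then z else z ^ 2) :=
      mul_right_cancel₀ ha h1
    have hzz2 : z ≠ z ^ 2 := by
      intro h
      apply hz1
      have := mul_left_cancel₀ hz0 (by rw [mul_one]; exact h.trans (by ring) :
        z * 1 = z * z)
      exact this.symm
    rcases Bool.eq_false_or_eq_true (f qc) with hf | hf <;>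
      rcases Bool.eq_false_or_eq_true (f' qc) with hf' | hf'
    · exact hqc (hf.trans hf'.symm)
    · rw [hf, hf'] at h2
      simp at h2
      exact hzz2 h2
    · rw [hf, hf'] at h2
      simp at h2
      exact hzz2 h2.symm
    · exact hqc (hf.trans hf'.symm)
  -- Counting
  have hrange : Set.range T ⊆
      {T' : Set (HeisSubgroup K × HeisSubgroup K × HeisSubgroup K) | IsTrianglePresentationG (FGS S) T'} := by
    rintro _ ⟨f, rfl⟩
    exact hTtri f
  have hcount : (Set.range T).ncard = 2 ^ ((q - 1) / 3) := by
    rw [← Set.image_univ, Set.ncard_image_of_injective _ hTinj, Set.ncard_univ,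
      Nat.card_fun, hQcard, Nat.card_eq_fintype_card, Fintype.card_bool]
  rw [← hcount]
  exact Set.ncard_le_ncard hrange (Set.toFinite _)
end
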